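/- arXiv:1006.0536 — 8 statements merged into one kernel-verified Lean document; each statement's English description precedes it below -/
import Mathlib

section
/- Let X be a nonempty set and Y a normed space over ℝ or ℂ, and let p₁, p₂, q₁, q₂ satisfy condition (★) with p₁ < p₂. If f, g : X → Y are arbitrary maps and there is a constant C > 0 such that Σ_{j=1}^m ‖f(x_j)‖^{q₁} ≤ C · Σ_{j=1}^m ‖g(x_j)‖^{p₁} for every m ∈ ℕ and all x₁, …, x_m ∈ X, then there is a constant C₁ > 0 such that (Σ_{j=1}^m ‖f(x_j)‖^{q₂})^{1/α} ≤ C₁ · Σ_{j=1}^m ‖g(x_j)‖^{p₂} for every m ∈ ℕ and all x₁, …, x_m ∈ X, where α = q₂p₁/(q₁p₂). -/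
open scoped BigOperators

private lemma real_add_rpow_le (a b t : ℝ) (ha : 0 ≤ a) (hb : 0 ≤ b) (ht : 1 ≤ t) :
    a ^ t + b ^ t ≤ (a + b) ^ t := by
  have h := NNReal.add_rpow_le_rpow_add (Real.toNNReal a) (Real.toNNReal b) ht
  have h' := NNReal.coe_le_coe.mpr h
  rw [NNReal.coe_add, NNReal.coe_rpow, NNReal.coe_rpow, NNReal.coe_rpow, NNReal.coe_add,
    Real.coe_toNNReal _ ha, Real.coe_toNNReal _ hb] at h'
  exact h'

private lemma sum_rpow_le_rpow_sum {ι : Type*} (s : Finset ι) (c : ι → ℝ)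
    (hc : ∀ j ∈ s, 0 ≤ c j) {t : ℝ} (ht : 1 ≤ t) :
    ∑ j ∈ s, c j ^ t ≤ (∑ j ∈ s, c j) ^ t := by
  induction s using Finset.cons_induction with
  | empty => simp [Real.zero_rpow (by positivity : t ≠ 0)]
  | cons a s ha ih =>
    simp only [Finset.sum_cons]
    have hca : 0 ≤ c a := hc a (Finset.mem_cons_self _ _)
    have hc' : ∀ j ∈ s, 0 ≤ c j := fun j hj => hc j (Finset.mem_cons_of_mem hj)
    have hs : 0 ≤ ∑ j ∈ s, c j := Finset.sum_nonneg hc'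
    calc c a ^ t + ∑ j ∈ s, c j ^ t ≤ c a ^ t + (∑ j ∈ s, c j) ^ t := by
          gcongr; exact ih hc'
      _ ≤ (c a + ∑ j ∈ s, c j) ^ t := real_add_rpow_le _ _ _ hca hs ht

/-- If `X` is a nonempty set, `Y` a normed space over `ℝ` or `ℂ`,
`p₁, p₂, q₁, q₂` satisfy condition (★) with `p₁ < p₂`, and `f, g : X → Y` are arbitrary
maps with `∑ ‖f xⱼ‖^q₁ ≤ C ∑ ‖g xⱼ‖^p₁` for all finite families, then there is `C₁ > 0`
with `(∑ ‖f xⱼ‖^q₂)^(1/α) ≤ C₁ ∑ ‖g xⱼ‖^p₂` for all finite families, where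
`α = q₂ p₁ / (q₁ p₂)`. -/
theorem stmt0 {𝕜 : Type*} [RCLike 𝕜] {X : Type*} [Nonempty X]
    {Y : Type*} [NormedAddCommGroup Y] [NormedSpace 𝕜 Y]
    (p₁ p₂ q₁ q₂ : ℝ)
    (hp₁ : 1 ≤ p₁) (hp₁₂ : p₁ ≤ p₂) (hq₁ : 1 ≤ q₁) (hq₁₂ : q₁ ≤ q₂)
    (hpq₁ : p₁ ≤ q₁) (hpq₂ : p₂ ≤ q₂)
    (hstar : 1 / p₁ - 1 / q₁ ≤ 1 / p₂ - 1 / q₂)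
    (hlt : p₁ < p₂)
    (f g : X → Y) (C : ℝ) (hC : 0 < C)
    (h : ∀ (m : ℕ) (x : Fin m → X),
      ∑ j, ‖f (x j)‖ ^ q₁ ≤ C * ∑ j, ‖g (x j)‖ ^ p₁) :
    ∃ C₁ > 0, ∀ (m : ℕ) (x : Fin m → X),
      (∑ j, ‖f (x j)‖ ^ q₂) ^ (1 / (q₂ * p₁ / (q₁ * p₂))) ≤
        C₁ * ∑ j, ‖g (x j)‖ ^ p₂ := by
  have hp1 : (0:ℝ) < p₁ := by linarith
  have hp2 : (0:ℝ) < p₂ := by linarith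
  have hq1 : (0:ℝ) < q₁ := by linarith
  have hq2 : (0:ℝ) < q₂ := by linarith
  have hq12 : (0:ℝ) ≤ 1/q₁ - 1/q₂ := by
    have := one_div_le_one_div_of_le hq1 hq₁₂
    linarith
  have h3 : p₂ * (1/p₁ - 1/p₂) ≤ q₂ * (1/q₁ - 1/q₂) := by
    calc p₂ * (1/p₁ - 1/p₂) ≤ p₂ * (1/q₁ - 1/q₂) := by
          apply mul_le_mul_of_nonneg_left _ hp2.le
          linarith
      _ ≤ q₂ * (1/q₁ - 1/q₂) := mul_le_mul_of_nonneg_right hpq₂ hq12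
  have e1 : p₂ * (1/p₁ - 1/p₂) = p₂/p₁ - 1 := by field_simp
  have e2 : q₂ * (1/q₁ - 1/q₂) = q₂/q₁ - 1 := by field_simp
  have h5 : p₂/p₁ ≤ q₂/q₁ := by rw [e1, e2] at h3; linarith
  have hkey : q₁ * p₂ ≤ q₂ * p₁ := by
    rw [div_le_div_iff₀ hp1 hq1] at h5; linarith
  set β := q₁ * p₂ / (q₂ * p₁) with hβdef
  have hβeq : 1 / (q₂ * p₁ / (q₁ * p₂)) = β := one_div_div _ _
  have hβpos : 0 < β := by positivity
  refine ⟨C ^ (p₂/p₁), by positivity, fun m x => ?_⟩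
  have hpt : ∀ z : X, ‖f z‖ ^ q₁ ≤ C * ‖g z‖ ^ p₁ := by
    intro z
    have := h 1 (fun _ => z)
    simpa using this
  set r := p₁ * q₂ / q₁ with hrdef
  have hrp2 : p₂ ≤ r := by
    rw [hrdef, le_div_iff₀ hq1]; nlinarith
  have step1 : ∑ j, ‖f (x j)‖ ^ q₂ ≤ C ^ (q₂/q₁) * ∑ j, (‖g (x j)‖ ^ p₂) ^ (r / p₂) := by
    rw [Finset.mul_sum]
    apply Finset.sum_le_sum
    intro j _
    have hfj : (0:ℝ) ≤ ‖f (x j)‖ := norm_nonneg _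
    have hgj : (0:ℝ) ≤ ‖g (x j)‖ := norm_nonneg _
    have hrw : ‖f (x j)‖ ^ q₂ = (‖f (x j)‖ ^ q₁) ^ (q₂/q₁) := by
      rw [← Real.rpow_mul hfj]
      congr 1
      field_simp
    rw [hrw]
    have h2 : (‖f (x j)‖ ^ q₁) ^ (q₂/q₁) ≤ (C * ‖g (x j)‖ ^ p₁) ^ (q₂/q₁) :=
      Real.rpow_le_rpow (by positivity) (hpt _) (by positivity)
    refine h2.trans_eq ?_
    rw [Real.mul_rpow hC.le (by positivity), ← Real.rpow_mul hgj,
      ← Real.rpow_mul hgj]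
    congr 2
    rw [hrdef]
    field_simp
  have step2 : ∑ j, (‖g (x j)‖ ^ p₂) ^ (r/p₂) ≤ (∑ j, ‖g (x j)‖ ^ p₂) ^ (r/p₂) :=
    sum_rpow_le_rpow_sum _ _ (fun j _ => by positivity) ((one_le_div hp2).mpr hrp2)
  have hB : (0:ℝ) ≤ ∑ j, ‖g (x j)‖ ^ p₂ := by positivity
  have total : ∑ j, ‖f (x j)‖ ^ q₂ ≤ C ^ (q₂/q₁) * (∑ j, ‖g (x j)‖ ^ p₂) ^ (r/p₂) :=
    step1.trans (mul_le_mul_of_nonneg_left step2 (by positivity))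
  rw [hβeq]
  calc (∑ j, ‖f (x j)‖ ^ q₂) ^ β
      ≤ (C ^ (q₂/q₁) * (∑ j, ‖g (x j)‖ ^ p₂) ^ (r/p₂)) ^ β :=
        Real.rpow_le_rpow (by positivity) total hβpos.le
    _ = C ^ (p₂/p₁) * ∑ j, ‖g (x j)‖ ^ p₂ := by
        rw [Real.mul_rpow (by positivity) (by positivity), ← Real.rpow_mul hC.le,
          ← Real.rpow_mul hB]
        have eq1 : q₂/q₁ * β = p₂/p₁ := by
          rw [hβdef]; field_simp
        have eq2 : r/p₂ * β = 1 := by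
          rw [hrdef, hβdef]; field_simp
        rw [eq1, eq2, Real.rpow_one]
end

section
/- Let Z, V, W be nonempty sets, S : Z × V → [0,∞), R : Z × W → [0,∞), 1 ≤ p, q < ∞ and C > 0. Assume that for every m ∈ ℕ and all z₁, …, z_m ∈ Z one has sup_{w∈W} Σ_{j=1}^m R(z_j, w)^p < ∞ and sup_{v∈V} Σ_{j=1}^m S(z_j, v)^q < ∞. If sup_{v∈V} Σ_{j=1}^m S(z_j, v)^q ≤ C · sup_{w∈W} Σ_{j=1}^m R(z_j, w)^p for every m ∈ ℕ and all z₁, …, z_m ∈ Z, then for every m ∈ ℕ, all z₁, …, z_m ∈ Z and all positive real numbers η₁, …, η_m one has sup_{v∈V} Σ_{j=1}^m η_j S(z_j, v)^q ≤ C · sup_{w∈W} Σ_{j=1}^m η_j R(z_j, w)^p. -/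
open scoped BigOperators

private lemma rep_family {Z : Type*} (m : ℕ) (z : Fin m → Z) (n : Fin m → ℕ) :
    ∃ (N : ℕ) (z' : Fin N → Z), ∀ (F : Z → ℝ),
      ∑ i, F (z' i) = ∑ j, (n j : ℝ) * F (z j) := by
  have hcard : Fintype.card (Σ j : Fin m, Fin (n j)) = ∑ j, n j := by
    simp [Fintype.card_sigma]
  let e : (Σ j : Fin m, Fin (n j)) ≃ Fin (∑ j, n j) :=
    Fintype.equivFinOfCardEq hcard
  refine ⟨∑ j, n j, fun i => z ((e.symm i).1), fun F => ?_⟩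
  have h1 : ∑ i : Fin (∑ j, n j), F (z ((e.symm i).1))
      = ∑ s : Σ j : Fin m, Fin (n j), F (z s.1) :=
    Fintype.sum_equiv e.symm _ _ (fun _ => rfl)
  rw [h1]
  have h2 : ∑ s : Σ j : Fin m, Fin (n j), F (z s.1)
      = ∑ j : Fin m, ∑ _i : Fin (n j), F (z j) := by
    rw [← Finset.univ_sigma_univ, Finset.sum_sigma]
  rw [h2]
  simp [mul_comm]

/-- If `sup_{v∈V} ∑ S(zⱼ,v)^q ≤ C ⋅ sup_{w∈W} ∑ R(zⱼ,w)^p` for all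
finite families in `Z`, then the same weighted inequality holds for arbitrary positive
real weights `η₁, …, η_m`. -/
theorem stmt1 {Z V W : Type*} [Nonempty Z] [Nonempty V] [Nonempty W]
    (S : Z → V → ℝ) (R : Z → W → ℝ)
    (hS : ∀ z v, 0 ≤ S z v) (hR : ∀ z w, 0 ≤ R z w)
    (p q : ℝ) (hp : 1 ≤ p) (hq : 1 ≤ q) (C : ℝ) (hC : 0 < C)
    (hRbdd : ∀ (m : ℕ) (z : Fin m → Z),
      BddAbove (Set.range fun w : W => ∑ j, R (z j) w ^ p))
    (hSbdd : ∀ (m : ℕ) (z : Fin m → Z),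
      BddAbove (Set.range fun v : V => ∑ j, S (z j) v ^ q))
    (h : ∀ (m : ℕ) (z : Fin m → Z),
      (⨆ v : V, ∑ j, S (z j) v ^ q) ≤ C * ⨆ w : W, ∑ j, R (z j) w ^ p) :
    ∀ (m : ℕ) (z : Fin m → Z) (η : Fin m → ℝ), (∀ j, 0 < η j) →
      (⨆ v : V, ∑ j, η j * S (z j) v ^ q) ≤
        C * ⨆ w : W, ∑ j, η j * R (z j) w ^ p := by
  intro m z η hη
  have hSq : ∀ (j : Fin m) (v : V), 0 ≤ S (z j) v ^ q :=
    fun j v => Real.rpow_nonneg (hS _ _) q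
  have hRp : ∀ (j : Fin m) (w : W), 0 ≤ R (z j) w ^ p :=
    fun j w => Real.rpow_nonneg (hR _ _) p
  -- boundedness of weighted sums, for any nonneg weights
  have bddS : ∀ (c : Fin m → ℝ), (∀ j, 0 ≤ c j) →
      BddAbove (Set.range fun v : V => ∑ j, c j * S (z j) v ^ q) := by
    intro c hc
    obtain ⟨M, hM⟩ := hSbdd m z
    refine ⟨(∑ j, c j) * M, ?_⟩
    rintro x ⟨v, rfl⟩
    calc ∑ j, c j * S (z j) v ^ q ≤ ∑ j, c j * (∑ k, S (z k) v ^ q) := by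
          refine Finset.sum_le_sum fun j _ => ?_
          exact mul_le_mul_of_nonneg_left
            (Finset.single_le_sum (fun k _ => hSq k v) (Finset.mem_univ j)) (hc j)
      _ = (∑ j, c j) * (∑ k, S (z k) v ^ q) := by rw [Finset.sum_mul]
      _ ≤ (∑ j, c j) * M := by
          refine mul_le_mul_of_nonneg_left (hM ⟨v, rfl⟩)
            (Finset.sum_nonneg fun j _ => hc j)
  have bddR : ∀ (c : Fin m → ℝ), (∀ j, 0 ≤ c j) →
      BddAbove (Set.range fun w : W => ∑ j, c j * R (z j) w ^ p) := by
    intro c hc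
    obtain ⟨M, hM⟩ := hRbdd m z
    refine ⟨(∑ j, c j) * M, ?_⟩
    rintro x ⟨w, rfl⟩
    calc ∑ j, c j * R (z j) w ^ p ≤ ∑ j, c j * (∑ k, R (z k) w ^ p) := by
          refine Finset.sum_le_sum fun j _ => ?_
          exact mul_le_mul_of_nonneg_left
            (Finset.single_le_sum (fun k _ => hRp k w) (Finset.mem_univ j)) (hc j)
      _ = (∑ j, c j) * (∑ k, R (z k) w ^ p) := by rw [Finset.sum_mul]
      _ ≤ (∑ j, c j) * M := by
          refine mul_le_mul_of_nonneg_left (hM ⟨w, rfl⟩)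
            (Finset.sum_nonneg fun j _ => hc j)
  -- natural number weights
  have hnat : ∀ (n : Fin m → ℕ),
      (⨆ v : V, ∑ j, (n j : ℝ) * S (z j) v ^ q) ≤
        C * ⨆ w : W, ∑ j, (n j : ℝ) * R (z j) w ^ p := by
    intro n
    obtain ⟨N, z', hz'⟩ := rep_family m z n
    have hL : (⨆ v : V, ∑ i, S (z' i) v ^ q)
        = ⨆ v : V, ∑ j, (n j : ℝ) * S (z j) v ^ q :=
      iSup_congr fun v => hz' (fun ζ => S ζ v ^ q)
    have hRR : (⨆ w : W, ∑ i, R (z' i) w ^ p)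
        = ⨆ w : W, ∑ j, (n j : ℝ) * R (z j) w ^ p :=
      iSup_congr fun w => hz' (fun ζ => R ζ w ^ p)
    have := h N z'
    rwa [hL, hRR] at this
  -- rational (scaled natural) weights
  have hrat : ∀ (n : Fin m → ℕ) (t : ℝ), 0 < t →
      (⨆ v : V, ∑ j, ((n j : ℝ) * t) * S (z j) v ^ q) ≤
        C * ⨆ w : W, ∑ j, ((n j : ℝ) * t) * R (z j) w ^ p := by
    intro n t ht
    have hL : (⨆ v : V, ∑ j, ((n j : ℝ) * t) * S (z j) v ^ q)
        = t * ⨆ v : V, ∑ j, (n j : ℝ) * S (z j) v ^ q := by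
      rw [Real.mul_iSup_of_nonneg ht.le]
      refine iSup_congr fun v => ?_
      rw [Finset.mul_sum]
      exact Finset.sum_congr rfl fun j _ => by ring
    have hRR : (⨆ w : W, ∑ j, ((n j : ℝ) * t) * R (z j) w ^ p)
        = t * ⨆ w : W, ∑ j, (n j : ℝ) * R (z j) w ^ p := by
      rw [Real.mul_iSup_of_nonneg ht.le]
      refine iSup_congr fun w => ?_
      rw [Finset.mul_sum]
      exact Finset.sum_congr rfl fun j _ => by ring
    rw [hL, hRR, mul_left_comm]
    exact mul_le_mul_of_nonneg_left (hnat n) ht.le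
  -- the suprema we care about
  set A := ⨆ w : W, ∑ j, η j * R (z j) w ^ p with hA
  have bddA : BddAbove (Set.range fun w : W => ∑ j, η j * R (z j) w ^ p) :=
    bddR η fun j => (hη j).le
  set M0 := ⨆ w : W, ∑ j, R (z j) w ^ p with hM0
  have bddM0 : BddAbove (Set.range fun w : W => ∑ j, R (z j) w ^ p) := hRbdd m z
  have hM0nn : 0 ≤ M0 := by
    obtain ⟨w⟩ := (inferInstance : Nonempty W)
    exact le_trans (Finset.sum_nonneg fun j _ => hRp j w) (le_ciSup bddM0 w)
  -- epsilon argument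
  refine le_of_forall_pos_le_add fun ε hε => ?_
  obtain ⟨N, hN⟩ := exists_nat_gt (max (C * M0 / ε) 0)
  have hNpos : (0 : ℝ) < N := lt_of_le_of_lt (le_max_right _ _) hN
  set t : ℝ := 1 / N with htdef
  have htpos : 0 < t := by positivity
  set n : Fin m → ℕ := fun j => ⌈η j * N⌉₊ with hn
  have hlow : ∀ j, η j ≤ (n j : ℝ) * t := by
    intro j
    rw [htdef, mul_one_div, le_div_iff₀ hNpos]
    exact Nat.le_ceil _
  have hhigh : ∀ j, (n j : ℝ) * t ≤ η j + t := by
    intro j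
    rw [htdef, mul_one_div, div_le_iff₀ hNpos]
    calc ((n j : ℝ)) ≤ η j * N + 1 := le_of_lt (Nat.ceil_lt_add_one (mul_nonneg (hη j).le hNpos.le))
      _ = (η j + 1 / N) * N := by field_simp
  have step1 : (⨆ v : V, ∑ j, η j * S (z j) v ^ q)
      ≤ ⨆ v : V, ∑ j, ((n j : ℝ) * t) * S (z j) v ^ q := by
    refine ciSup_mono (bddS (fun j => (n j : ℝ) * t)
      (fun j => by positivity)) fun v => ?_
    exact Finset.sum_le_sum fun j _ =>
      mul_le_mul_of_nonneg_right (hlow j) (hSq j v)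
  have step3 : (⨆ w : W, ∑ j, ((n j : ℝ) * t) * R (z j) w ^ p) ≤ A + t * M0 := by
    refine ciSup_le fun w => ?_
    calc ∑ j, ((n j : ℝ) * t) * R (z j) w ^ p
        ≤ ∑ j, (η j + t) * R (z j) w ^ p :=
          Finset.sum_le_sum fun j _ =>
            mul_le_mul_of_nonneg_right (hhigh j) (hRp j w)
      _ = (∑ j, η j * R (z j) w ^ p) + t * ∑ j, R (z j) w ^ p := by
          rw [Finset.mul_sum, ← Finset.sum_add_distrib]
          exact Finset.sum_congr rfl fun j _ => by ring
      _ ≤ A + t * M0 := by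
          refine add_le_add (le_ciSup bddA w) ?_
          exact mul_le_mul_of_nonneg_left (le_ciSup bddM0 w) htpos.le
  have key : (⨆ v : V, ∑ j, η j * S (z j) v ^ q) ≤ C * (A + t * M0) :=
    le_trans step1 (le_trans (hrat n t htpos)
      (mul_le_mul_of_nonneg_left step3 hC.le))
  refine le_trans key ?_
  have : C * t * M0 ≤ ε := by
    rw [htdef, mul_one_div, div_mul_eq_mul_div, div_le_iff₀ hNpos]
    have h1 : C * M0 / ε < N := lt_of_le_of_lt (le_max_left _ _) hN
    rw [div_lt_iff₀ hε] at h1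
    nlinarith
  nlinarith
end

section
/- (Multilinear Inclusion Principle.) Let 𝕂 be ℝ or ℂ, Z a 𝕂-vector space, and G, V, W nonempty sets. Let R : Z × G × W → [0,∞) and S : Z × G × V → [0,∞) be multiplicative in the variable Z, i.e. R(λz, g, w) = |λ| R(z, g, w) and S(λz, g, v) = |λ| S(z, g, v) for all λ ∈ 𝕂, z ∈ Z, g ∈ G, w ∈ W, v ∈ V. Let p₁, p₂, q₁, q₂ satisfy condition (★), and assume that for every m ∈ ℕ, z₁, …, z_m ∈ Z and g₁, …, g_m ∈ G the quantities sup_{w∈W} Σ_{j=1}^m R(z_j, g_j, w)^{p} (for p = p₁ and p = p₂) and sup_{v∈V} Σ_{j=1}^m S(z_j, g_j, v)^{q} (for q = q₁ and q = q₂) are finite. If there is C > 0 such that (sup_{v∈V} Σ_{j=1}^m S(z_j, g_j, v)^{q₁})^{1/q₁} ≤ C · (sup_{w∈W} Σ_{j=1}^m R(z_j, g_j, w)^{p₁})^{1/p₁} for every m ∈ ℕ and all z_j ∈ Z, g_j ∈ G, then (sup_{v∈V} Σ_{j=1}^m S(z_j, g_j, v)^{q₂})^{1/q₂} ≤ C ·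 (sup_{w∈W} Σ_{j=1}^m R(z_j, g_j, w)^{p₂})^{1/p₂} for every m ∈ ℕ and all z_j ∈ Z, g_j ∈ G. -/
/-!
The `(q₂, p₂)` inequality follows from the `(q₁, p₁)` one applied to rescaled vectors `tⱼ • zⱼ`.
For fixed `v`, with `sⱼ = S(zⱼ, gⱼ, v)` and `ρ = 1/q₁ - 1/q₂`, the weights
`tⱼ = (sⱼ ^ q₂ / ∑ s ^ q₂) ^ ρ` satisfy `∑ tⱼ ^ (1/ρ) = 1` and turn the `ℓ^{q₁}`-norm of `(tⱼ sⱼ)`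
into the `ℓ^{q₂}`-norm of `s`. On the `R` side, Hölder's inequality with exponent
`(1/p₁ - 1/p₂)⁻¹ ≥ 1/ρ` (this is (★)) bounds the `ℓ^{p₁}`-norm of `(tⱼ rⱼ)` by the
`ℓ^{p₂}`-norm of `r`.
-/

open Finset

lemma iSup_rpow_one_div_le {ι : Sort*} {f : ι → ℝ} {q c : ℝ} (hq : 0 < q)
    (hf : ∀ i, 0 ≤ f i) (hc : 0 ≤ c) (h : ∀ i, f i ^ (1 / q) ≤ c) :
    (⨆ i, f i) ^ (1 / q) ≤ c := by
  have hpow : ∀ {x}, 0 ≤ x → (x ^ (1 / q) ≤ c ↔ x ≤ c ^ q) := fun hx => by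
    rw [one_div, Real.rpow_inv_le_iff_of_pos hx hc hq]
  exact (hpow (Real.iSup_nonneg hf)).2 <|
    Real.iSup_le (fun i => (hpow (hf i)).1 (h i)) (Real.rpow_nonneg hc q)

section FiniteSums

variable {ι : Type*} [Fintype ι] {t : ι → ℝ}

lemma le_one_of_sum_rpow_le_one (ht : ∀ i, 0 ≤ t i) {a : ℝ} (ha : 0 < a)
    (h : ∑ i, t i ^ a ≤ 1) (i : ι) : t i ≤ 1 := by
  have hi : t i ^ a ≤ 1 :=
    (single_le_sum (fun j _ => Real.rpow_nonneg (ht j) a) (mem_univ i)).trans h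
  by_contra! hlt
  exact hi.not_gt (Real.one_lt_rpow hlt ha)

lemma sum_rpow_le_one_of_le (ht : ∀ i, 0 ≤ t i) {a b : ℝ} (ha : 0 < a) (hab : a ≤ b)
    (h : ∑ i, t i ^ a ≤ 1) : ∑ i, t i ^ b ≤ 1 :=
  (sum_le_sum fun i _ => Real.rpow_le_rpow_of_exponent_ge' (ht i)
    (le_one_of_sum_rpow_le_one ht ha h i) ha.le hab).trans h

lemma rpow_sum_mul_rpow_le {r : ι → ℝ} {p₁ p₂ ρ : ℝ} (hp₁ : 0 < p₁) (hp : p₁ ≤ p₂)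
    (hρ : 0 < ρ) (hρp : 1 / p₁ - 1 / p₂ ≤ ρ) (ht : ∀ i, 0 ≤ t i) (hr : ∀ i, 0 ≤ r i)
    (ht1 : ∑ i, t i ^ (1 / ρ) ≤ 1) :
    (∑ i, (t i * r i) ^ p₁) ^ (1 / p₁) ≤ (∑ i, r i ^ p₂) ^ (1 / p₂) := by
  have hr₀ : ∀ p : ℝ, 0 ≤ ∑ i, r i ^ p := fun p => sum_nonneg fun i _ => Real.rpow_nonneg (hr i) p
  rcases hp.eq_or_lt with rfl | hlt
  · refine Real.rpow_le_rpow (sum_nonneg fun i _ => Real.rpow_nonneg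
      (mul_nonneg (ht i) (hr i)) _) (sum_le_sum fun i _ => ?_) (by positivity)
    rw [Real.mul_rpow (ht i) (hr i)]
    exact mul_le_of_le_one_left (Real.rpow_nonneg (hr i) _)
      (Real.rpow_le_one (ht i) (le_one_of_sum_rpow_le_one ht (by positivity) ht1 i) hp₁.le)
  set a := (1 / p₁ - 1 / p₂)⁻¹
  have hp₂ : 0 < p₂ := hp₁.trans hlt
  have hδ : 0 < 1 / p₁ - 1 / p₂ := sub_pos.2 (one_div_lt_one_div_of_lt hp₁ hlt)
  have ha : 0 < a := inv_pos.2 hδ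
  have htriple : a.HolderTriple p₂ p₁ := ⟨by simp [a, one_div], ha, hp₂⟩
  have hta : ∑ i, t i ^ a ≤ 1 := sum_rpow_le_one_of_le ht (by positivity) (by
    rw [one_div]; exact inv_anti₀ hδ hρp) ht1
  have hta₀ : 0 ≤ ∑ i, t i ^ a := sum_nonneg fun i _ => Real.rpow_nonneg (ht i) a
  calc (∑ i, (t i * r i) ^ p₁) ^ (1 / p₁)
      ≤ ((∑ i, t i ^ a) ^ (p₁ / a) * (∑ i, r i ^ p₂) ^ (p₁ / p₂)) ^ (1 / p₁) :=
        Real.rpow_le_rpow (sum_nonneg fun i _ => Real.rpow_nonneg (mul_nonneg (ht i) (hr i)) _)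
          (Real.Lr_rpow_le_Lp_mul_Lq_of_nonneg univ htriple (fun i _ => ht i) fun i _ => hr i)
          (by positivity)
    _ = (∑ i, t i ^ a) ^ (1 / a) * (∑ i, r i ^ p₂) ^ (1 / p₂) := by
        rw [Real.mul_rpow (by positivity) (Real.rpow_nonneg (hr₀ p₂) _), ← Real.rpow_mul hta₀,
          ← Real.rpow_mul (hr₀ p₂), div_mul_div_cancel₀' hp₁.ne', div_mul_div_cancel₀' hp₁.ne']
    _ ≤ (∑ i, r i ^ p₂) ^ (1 / p₂) :=
        mul_le_of_le_one_left (Real.rpow_nonneg (hr₀ p₂) _)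
          (Real.rpow_le_one hta₀ hta (by positivity))

lemma exists_weight_rpow_sum_mul_eq {s : ι → ℝ} (hs : ∀ i, 0 ≤ s i) {q₁ q₂ : ℝ}
    (hq₁ : 0 < q₁) (hq : q₁ < q₂) :
    ∃ t : ι → ℝ, (∀ i, 0 ≤ t i) ∧ ∑ i, t i ^ (1 / (1 / q₁ - 1 / q₂)) ≤ 1 ∧
      (∑ i, (t i * s i) ^ q₁) ^ (1 / q₁) = (∑ i, s i ^ q₂) ^ (1 / q₂) := by
  set ρ := 1 / q₁ - 1 / q₂
  set σ := ∑ i, s i ^ q₂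
  have hq₂ : 0 < q₂ := hq₁.trans hq
  have hρ : 0 < ρ := sub_pos.2 (one_div_lt_one_div_of_lt hq₁ hq)
  have hσ₀ : 0 ≤ σ := sum_nonneg fun i _ => Real.rpow_nonneg (hs i) _
  rcases hσ₀.eq_or_lt with hσ | hσ
  · refine ⟨0, fun _ => le_rfl, ?_, ?_⟩
    · simp [Real.zero_rpow (inv_ne_zero hρ.ne')]
    · simp [← hσ, Real.zero_rpow hq₁.ne', Real.zero_rpow (inv_ne_zero hq₁.ne'),
        Real.zero_rpow (inv_ne_zero hq₂.ne')]
  set u : ι → ℝ := fun i => s i ^ q₂ / σ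
  have hu : ∀ i, 0 ≤ u i := fun i => div_nonneg (Real.rpow_nonneg (hs i) _) hσ₀
  have hu_sum : ∑ i, u i = 1 := by rw [← sum_div, div_self hσ.ne']
  have hts : ∀ i, u i ^ ρ * s i = u i ^ (1 / q₁) * σ ^ (1 / q₂) := fun i => by
    have hs_eq : s i = (u i * σ) ^ (1 / q₂) := by
      rw [div_mul_cancel₀ _ hσ.ne', ← Real.rpow_mul (hs i), mul_one_div_cancel hq₂.ne',
        Real.rpow_one]
    rw [hs_eq, Real.mul_rpow (hu i) hσ₀, ← mul_assoc,
      ← Real.rpow_add' (hu i) (by simp [ρ, hq₁.ne'])]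
    simp [ρ]
  refine ⟨fun i => u i ^ ρ, fun i => Real.rpow_nonneg (hu i) ρ, ?_, ?_⟩
  · simp_rw [← Real.rpow_mul (hu _), mul_one_div_cancel hρ.ne', Real.rpow_one, hu_sum, le_rfl]
  · simp_rw [hts, Real.mul_rpow (Real.rpow_nonneg (hu _) _) (Real.rpow_nonneg hσ₀ _),
      ← Real.rpow_mul (hu _), one_div_mul_cancel hq₁.ne', Real.rpow_one, ← sum_mul, hu_sum,
      one_mul, ← Real.rpow_mul (Real.rpow_nonneg hσ₀ _), mul_one_div_cancel hq₁.ne',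
      Real.rpow_one]

lemma iSup_rpow_sum_mul_rpow_le {W : Type*} {F : ι → W → ℝ} {p₁ p₂ ρ : ℝ} (hp₁ : 0 < p₁)
    (hp : p₁ ≤ p₂) (hρ : 0 < ρ) (hρp : 1 / p₁ - 1 / p₂ ≤ ρ) (ht : ∀ i, 0 ≤ t i)
    (hF : ∀ i w, 0 ≤ F i w) (hbdd : BddAbove (Set.range fun w => ∑ i, F i w ^ p₂))
    (ht1 : ∑ i, t i ^ (1 / ρ) ≤ 1) :
    (⨆ w, ∑ i, (t i * F i w) ^ p₁) ^ (1 / p₁) ≤ (⨆ w, ∑ i, F i w ^ p₂) ^ (1 / p₂) := by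
  have hp₂ : 0 < p₂ := hp₁.trans_le hp
  have hF₀ : ∀ p : ℝ, ∀ w, 0 ≤ ∑ i, F i w ^ p := fun p w =>
    sum_nonneg fun i _ => Real.rpow_nonneg (hF i w) p
  refine iSup_rpow_one_div_le hp₁ (fun w => sum_nonneg fun i _ =>
    Real.rpow_nonneg (mul_nonneg (ht i) (hF i w)) _)
    (Real.rpow_nonneg (Real.iSup_nonneg (hF₀ p₂)) _) fun w => ?_
  exact (rpow_sum_mul_rpow_le hp₁ hp hρ hρp ht (hF · w) ht1).trans <|
    Real.rpow_le_rpow (hF₀ p₂ w) (le_ciSup hbdd w) (by positivity)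

end FiniteSums

lemma apply_ofReal_smul {𝕜 Z G X : Type*} [RCLike 𝕜] [SMul 𝕜 Z] (F : Z → G → X → ℝ)
    (hF : ∀ (lam : 𝕜) (z : Z) (g : G) (x : X), F (lam • z) g x = ‖lam‖ * F z g x)
    {t : ℝ} (ht : 0 ≤ t) (z : Z) (g : G) (x : X) : F ((t : 𝕜) • z) g x = t * F z g x := by
  rw [hF, RCLike.norm_ofReal, abs_of_nonneg ht]

theorem stmt3_general {𝕜 : Type*} [RCLike 𝕜] {Z : Type*} [AddCommGroup Z] [Module 𝕜 Z]
    {G V W : Type*}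
    (R : Z → G → W → ℝ) (S : Z → G → V → ℝ)
    (hRnn : ∀ z g w, 0 ≤ R z g w) (hSnn : ∀ z g v, 0 ≤ S z g v)
    (hRmul : ∀ (lam : 𝕜) (z : Z) (g : G) (w : W), R (lam • z) g w = ‖lam‖ * R z g w)
    (hSmul : ∀ (lam : 𝕜) (z : Z) (g : G) (v : V), S (lam • z) g v = ‖lam‖ * S z g v)
    (p₁ p₂ q₁ q₂ : ℝ)
    (hp₁ : 1 ≤ p₁) (hp₁₂ : p₁ ≤ p₂) (hq₁ : 1 ≤ q₁) (hq₁₂ : q₁ ≤ q₂)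
    (hstar : 1 / p₁ - 1 / q₁ ≤ 1 / p₂ - 1 / q₂)
    (hRbdd : ∀ (p : ℝ), p = p₁ ∨ p = p₂ → ∀ (m : ℕ) (z : Fin m → Z) (g : Fin m → G),
      BddAbove (Set.range fun w : W => ∑ j, R (z j) (g j) w ^ p))
    (hSbdd : ∀ (q : ℝ), q = q₁ ∨ q = q₂ → ∀ (m : ℕ) (z : Fin m → Z) (g : Fin m → G),
      BddAbove (Set.range fun v : V => ∑ j, S (z j) (g j) v ^ q))
    (C : ℝ) (hC : 0 < C)
    (h : ∀ (m : ℕ) (z : Fin m → Z) (g : Fin m → G),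
      (⨆ v : V, ∑ j, S (z j) (g j) v ^ q₁) ^ (1 / q₁) ≤
        C * (⨆ w : W, ∑ j, R (z j) (g j) w ^ p₁) ^ (1 / p₁)) :
    ∀ (m : ℕ) (z : Fin m → Z) (g : Fin m → G),
      (⨆ v : V, ∑ j, S (z j) (g j) v ^ q₂) ^ (1 / q₂) ≤
        C * (⨆ w : W, ∑ j, R (z j) (g j) w ^ p₂) ^ (1 / p₂) := by
  have hp₁₀ : 0 < p₁ := by linarith
  have hp₂₀ : 0 < p₂ := by linarith
  have hq₁₀ : 0 < q₁ := by linarith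
  intro m z g
  rcases hq₁₂.eq_or_lt with rfl | hq
  · obtain rfl : p₁ = p₂ :=
      hp₁₂.antisymm ((one_div_le_one_div hp₁₀ hp₂₀).1 (by linarith))
    exact h m z g
  have hB₀ : 0 ≤ ⨆ w, ∑ j, R (z j) (g j) w ^ p₂ :=
    Real.iSup_nonneg fun w => sum_nonneg fun j _ => Real.rpow_nonneg (hRnn ..) _
  refine iSup_rpow_one_div_le (hq₁₀.trans hq) (fun v => sum_nonneg fun j _ =>
    Real.rpow_nonneg (hSnn ..) _) (by positivity) fun v => ?_
  obtain ⟨t, ht₀, ht₁, hts⟩ :=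
    exists_weight_rpow_sum_mul_eq (fun j => hSnn (z j) (g j) v) hq₁₀ hq
  set z' : Fin m → Z := fun j => ((t j : ℝ) : 𝕜) • z j
  have hR' : ∀ j w, R (z' j) (g j) w = t j * R (z j) (g j) w :=
    fun j => apply_ofReal_smul R hRmul (ht₀ j) (z j) (g j)
  have hS' : ∀ j v', S (z' j) (g j) v' = t j * S (z j) (g j) v' :=
    fun j => apply_ofReal_smul S hSmul (ht₀ j) (z j) (g j)
  calc (∑ j, S (z j) (g j) v ^ q₂) ^ (1 / q₂)
      = (∑ j, S (z' j) (g j) v ^ q₁) ^ (1 / q₁) := by simp only [hS', hts]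
    _ ≤ (⨆ v, ∑ j, S (z' j) (g j) v ^ q₁) ^ (1 / q₁) :=
        Real.rpow_le_rpow (sum_nonneg fun j _ => Real.rpow_nonneg (hSnn ..) _)
          (le_ciSup (hSbdd q₁ (Or.inl rfl) m z' g) v) (by positivity)
    _ ≤ C * (⨆ w, ∑ j, R (z' j) (g j) w ^ p₁) ^ (1 / p₁) := h m z' g
    _ = C * (⨆ w, ∑ j, (t j * R (z j) (g j) w) ^ p₁) ^ (1 / p₁) := by simp only [hR']
    _ ≤ _ := by
        gcongr
        exact iSup_rpow_sum_mul_rpow_le hp₁₀ hp₁₂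
          (by linarith [one_div_lt_one_div_of_lt hq₁₀ hq]) (by linarith) ht₀ (fun j _ => hRnn ..)
          (hRbdd p₂ (Or.inr rfl) m z g) ht₁

/-- **Multilinear Inclusion Principle.** Let `𝕜` be `ℝ` or `ℂ`, `Z` a
`𝕜`-vector space, `G, V, W` nonempty sets, and `R`, `S` nonnegative maps which are
multiplicative in the variable `Z`.  If `p₁, p₂, q₁, q₂` satisfy condition (★) and
`(sup_v ∑ S(zⱼ,gⱼ,v)^{q₁})^{1/q₁} ≤ C (sup_w ∑ R(zⱼ,gⱼ,w)^{p₁})^{1/p₁}` for all finite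
families, then `(sup_v ∑ S(zⱼ,gⱼ,v)^{q₂})^{1/q₂} ≤ C (sup_w ∑ R(zⱼ,gⱼ,w)^{p₂})^{1/p₂}`
for all finite families. -/
theorem stmt3 {𝕜 : Type*} [RCLike 𝕜] {Z : Type*} [AddCommGroup Z] [Module 𝕜 Z]
    [Nonempty Z] {G V W : Type*} [Nonempty G] [Nonempty V] [Nonempty W]
    (R : Z → G → W → ℝ) (S : Z → G → V → ℝ)
    (hRnn : ∀ z g w, 0 ≤ R z g w) (hSnn : ∀ z g v, 0 ≤ S z g v)
    (hRmul : ∀ (lam : 𝕜) (z : Z) (g : G) (w : W), R (lam • z) g w = ‖lam‖ * R z g w)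
    (hSmul : ∀ (lam : 𝕜) (z : Z) (g : G) (v : V), S (lam • z) g v = ‖lam‖ * S z g v)
    (p₁ p₂ q₁ q₂ : ℝ)
    (hp₁ : 1 ≤ p₁) (hp₁₂ : p₁ ≤ p₂) (hq₁ : 1 ≤ q₁) (hq₁₂ : q₁ ≤ q₂)
    (hpq₁ : p₁ ≤ q₁) (hpq₂ : p₂ ≤ q₂)
    (hstar : 1 / p₁ - 1 / q₁ ≤ 1 / p₂ - 1 / q₂)
    (hRbdd : ∀ (p : ℝ), p = p₁ ∨ p = p₂ → ∀ (m : ℕ) (z : Fin m → Z) (g : Fin m → G),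
      BddAbove (Set.range fun w : W => ∑ j, R (z j) (g j) w ^ p))
    (hSbdd : ∀ (q : ℝ), q = q₁ ∨ q = q₂ → ∀ (m : ℕ) (z : Fin m → Z) (g : Fin m → G),
      BddAbove (Set.range fun v : V => ∑ j, S (z j) (g j) v ^ q))
    (C : ℝ) (hC : 0 < C)
    (h : ∀ (m : ℕ) (z : Fin m → Z) (g : Fin m → G),
      (⨆ v : V, ∑ j, S (z j) (g j) v ^ q₁) ^ (1 / q₁) ≤
        C * (⨆ w : W, ∑ j, R (z j) (g j) w ^ p₁) ^ (1 / p₁)) :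
    ∀ (m : ℕ) (z : Fin m → Z) (g : Fin m → G),
      (⨆ v : V, ∑ j, S (z j) (g j) v ^ q₂) ^ (1 / q₂) ≤
        C * (⨆ w : W, ∑ j, R (z j) (g j) w ^ p₂) ^ (1 / p₂) :=
  stmt3_general R S hRnn hSnn hRmul hSmul p₁ p₂ q₁ q₂ hp₁ hp₁₂ hq₁ hq₁₂ hstar hRbdd hSbdd C hC h
end

section
/- Let 1 ≤ p ≤ q < ∞ and let X₁, …, X_n, Y be Banach spaces. Every continuous n-linear map T : X₁ × ⋯ × X_n → Y which is strongly (p,p)-summing is strongly (q,q)-summing. -/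
/-!
Rescale one coordinate of each `xⱼ` by `‖T xⱼ‖ ^ ((q - p) / p)`. The strong `p`-sum of the
rescaled family is the strong `q`-sum `S` of the original one, while Hölder's inequality with
exponents `q / (q - p)` and `q / p` bounds its weak `p`-sum by `S ^ ((q - p) / q)` times the
`(p / q)`-th power of the weak `q`-sum of `x`. Cancelling the common power of `S` gives the
`(q, q)` inequality with the same constant. For `n = 0` nothing can be rescaled, but then `T` is
constant and bounded by `C`, while the constant form `1` makes the weak `q`-sum at least `m`.
-/

open scoped BigOperators

/-- A continuous `n`-linear map `T : X₁ × ⋯ × X_n → Y` is strongly `(q,p)`-summing if there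
is `C ≥ 0` with `(∑ⱼ ‖T(xⱼ¹,…,xⱼⁿ)‖^q)^{1/q} ≤ C (sup_{φ∈B} ∑ⱼ |φ(xⱼ¹,…,xⱼⁿ)|^p)^{1/p}`
for all finite families, where `B` is the closed unit ball of the space of continuous
`n`-linear scalar forms. -/
def IsStronglySumming {𝕜 : Type*} [RCLike 𝕜] {n : ℕ} {X : Fin n → Type*}
    [∀ i, NormedAddCommGroup (X i)] [∀ i, NormedSpace 𝕜 (X i)]
    {Y : Type*} [NormedAddCommGroup Y] [NormedSpace 𝕜 Y]
    (q p : ℝ) (T : ContinuousMultilinearMap 𝕜 X Y) : Prop :=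
  ∃ C : ℝ, 0 ≤ C ∧ ∀ (m : ℕ) (x : Fin m → ∀ i, X i),
    (∑ j, ‖T (x j)‖ ^ q) ^ (1 / q) ≤
      C * (⨆ φ : {φ : ContinuousMultilinearMap 𝕜 X 𝕜 // ‖φ‖ ≤ 1},
        ∑ j, ‖φ.1 (x j)‖ ^ p) ^ (1 / p)

section WeakSum

variable (𝕜 : Type*) [RCLike 𝕜] {ι : Type*} [Fintype ι] {X : ι → Type*}
  [∀ i, NormedAddCommGroup (X i)] [∀ i, NormedSpace 𝕜 (X i)]

noncomputable def weakSum (p : ℝ) {m : ℕ} (x : Fin m → ∀ i, X i) : ℝ :=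
  ⨆ φ : {φ : ContinuousMultilinearMap 𝕜 X 𝕜 // ‖φ‖ ≤ 1}, ∑ j, ‖φ.1 (x j)‖ ^ p

instance : Nonempty {φ : ContinuousMultilinearMap 𝕜 X 𝕜 // ‖φ‖ ≤ 1} := ⟨⟨0, by simp⟩⟩

variable {𝕜} {p : ℝ} {m : ℕ} (x : Fin m → ∀ i, X i)

theorem sum_norm_rpow_le_sum_prod_norm (hp : 0 ≤ p)
    (φ : {φ : ContinuousMultilinearMap 𝕜 X 𝕜 // ‖φ‖ ≤ 1}) :
    ∑ j, ‖φ.1 (x j)‖ ^ p ≤ ∑ j, (∏ i, ‖x j i‖) ^ p := by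
  refine Finset.sum_le_sum fun j _ => Real.rpow_le_rpow (norm_nonneg _) ?_ hp
  calc ‖φ.1 (x j)‖ ≤ ‖φ.1‖ * ∏ i, ‖x j i‖ := φ.1.le_opNorm _
    _ ≤ ∏ i, ‖x j i‖ := mul_le_of_le_one_left (by positivity) φ.2

theorem weakSum_le_sum_prod_norm (hp : 0 ≤ p) :
    weakSum 𝕜 p x ≤ ∑ j, (∏ i, ‖x j i‖) ^ p :=
  ciSup_le (sum_norm_rpow_le_sum_prod_norm x hp)

theorem sum_norm_rpow_le_weakSum (hp : 0 ≤ p)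
    (φ : {φ : ContinuousMultilinearMap 𝕜 X 𝕜 // ‖φ‖ ≤ 1}) :
    ∑ j, ‖φ.1 (x j)‖ ^ p ≤ weakSum 𝕜 p x :=
  le_ciSup ⟨_, Set.forall_mem_range.2 (sum_norm_rpow_le_sum_prod_norm x hp)⟩ φ

theorem weakSum_nonneg : 0 ≤ weakSum 𝕜 p x :=
  Real.iSup_nonneg fun _ => Finset.sum_nonneg fun _ _ => Real.rpow_nonneg (norm_nonneg _) _

end WeakSum

theorem isStronglySumming_iff {𝕜 : Type*} [RCLike 𝕜] {n : ℕ} {X : Fin n → Type*}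
    [∀ i, NormedAddCommGroup (X i)] [∀ i, NormedSpace 𝕜 (X i)]
    {Y : Type*} [NormedAddCommGroup Y] [NormedSpace 𝕜 Y]
    {q p : ℝ} {T : ContinuousMultilinearMap 𝕜 X Y} :
    IsStronglySumming q p T ↔ ∃ C : ℝ, 0 ≤ C ∧ ∀ (m : ℕ) (x : Fin m → ∀ i, X i),
      (∑ j, ‖T (x j)‖ ^ q) ^ (1 / q) ≤ C * weakSum 𝕜 p x ^ (1 / p) :=
  Iff.rfl

theorem ContinuousMultilinearMap.norm_map_update_rpow_smul_rpow {𝕜 : Type*} [RCLike 𝕜]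
    {ι : Type*} [Fintype ι] [DecidableEq ι] {X : ι → Type*}
    [∀ i, NormedAddCommGroup (X i)] [∀ i, NormedSpace 𝕜 (X i)]
    {Z : Type*} [NormedAddCommGroup Z] [NormedSpace 𝕜 Z]
    (S : ContinuousMultilinearMap 𝕜 X Z) (v : ∀ i, X i) (i₀ : ι) {a p : ℝ} (ha : 0 ≤ a)
    (hp : p ≠ 0) (r : ℝ) :
    ‖S (Function.update v i₀ (((a ^ (r / p) : ℝ) : 𝕜) • v i₀))‖ ^ p = a ^ r * ‖S v‖ ^ p := by
  have har : 0 ≤ a ^ (r / p) := Real.rpow_nonneg ha _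
  rw [S.map_update_smul, Function.update_eq_self, norm_smul, RCLike.norm_ofReal,
    abs_of_nonneg har, Real.mul_rpow har (norm_nonneg _), ← Real.rpow_mul ha,
    div_mul_cancel₀ _ hp]

theorem Real.sum_rpow_sub_mul_rpow_le {ι : Type*} (s : Finset ι) {p q : ℝ} (hp : 0 < p)
    (hpq : p < q) {a b : ι → ℝ} (ha : ∀ j ∈ s, 0 ≤ a j) (hb : ∀ j ∈ s, 0 ≤ b j) :
    ∑ j ∈ s, a j ^ (q - p) * b j ^ p ≤
      (∑ j ∈ s, a j ^ q) ^ ((q - p) / q) * (∑ j ∈ s, b j ^ q) ^ (p / q) := by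
  have hq : 0 < q := hp.trans hpq
  have hqp : 0 < q - p := sub_pos.2 hpq
  have hconj : Real.HolderConjugate (q / (q - p)) (q / p) := by
    refine ⟨?_, div_pos hq hqp, div_pos hq hp⟩
    rw [inv_div, inv_div, ← add_div, sub_add_cancel, div_self hq.ne', inv_one]
  have hA : ∑ j ∈ s, (a j ^ (q - p)) ^ (q / (q - p)) = ∑ j ∈ s, a j ^ q :=
    Finset.sum_congr rfl fun j hj => by rw [← Real.rpow_mul (ha j hj), mul_div_cancel₀ _ hqp.ne']
  have hB : ∑ j ∈ s, (b j ^ p) ^ (q / p) = ∑ j ∈ s, b j ^ q :=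
    Finset.sum_congr rfl fun j hj => by rw [← Real.rpow_mul (hb j hj), mul_div_cancel₀ _ hp.ne']
  calc ∑ j ∈ s, a j ^ (q - p) * b j ^ p
      ≤ (∑ j ∈ s, (a j ^ (q - p)) ^ (q / (q - p))) ^ (1 / (q / (q - p))) *
        (∑ j ∈ s, (b j ^ p) ^ (q / p)) ^ (1 / (q / p)) :=
        Real.inner_le_Lp_mul_Lq_of_nonneg s hconj
          (fun j hj => Real.rpow_nonneg (ha j hj) _) (fun j hj => Real.rpow_nonneg (hb j hj) _)
    _ = _ := by rw [hA, hB, one_div_div, one_div_div]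

theorem Real.rpow_one_div_le_of_le_mul_rpow {p q S D C : ℝ} (hp : 0 < p) (hpq : p < q)
    (hS : 0 ≤ S) (hD : 0 ≤ D) (hC : 0 ≤ C)
    (h : S ^ (1 / p) ≤ C * (S ^ ((q - p) / q) * D ^ (p / q)) ^ (1 / p)) :
    S ^ (1 / q) ≤ C * D ^ (1 / q) := by
  have hq : 0 < q := hp.trans hpq
  have hleft : S ^ (1 / p) = S ^ ((q - p) / (q * p)) * S ^ (1 / q) := by
    rw [← Real.rpow_add' hS (by positivity)]
    congr 1
    field_simp
    ring
  have hright : (S ^ ((q - p) / q) * D ^ (p / q)) ^ (1 / p) =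
      S ^ ((q - p) / (q * p)) * D ^ (1 / q) := by
    rw [Real.mul_rpow (by positivity) (by positivity), ← Real.rpow_mul hS, ← Real.rpow_mul hD]
    congr 2 <;> field_simp
  rw [hleft, hright, mul_left_comm] at h
  rcases hS.eq_or_lt with rfl | hSpos
  · rw [Real.zero_rpow (by positivity)]
    positivity
  · exact le_of_mul_le_mul_left h (Real.rpow_pos_of_pos hSpos _)

namespace IsStronglySumming

variable {𝕜 : Type*} [RCLike 𝕜] {n : ℕ} {X : Fin n → Type*}
  [∀ i, NormedAddCommGroup (X i)] [∀ i, NormedSpace 𝕜 (X i)]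
  {Y : Type*} [NormedAddCommGroup Y] [NormedSpace 𝕜 Y]
  {p q : ℝ} {T : ContinuousMultilinearMap 𝕜 X Y}

theorem of_isEmpty [IsEmpty (Fin n)] (hp : 0 < p) (hq : 0 < q)
    (hT : IsStronglySumming p p T) : IsStronglySumming q q T := by
  obtain ⟨C, hC0, hC⟩ := isStronglySumming_iff.1 hT
  refine isStronglySumming_iff.2 ⟨C, hC0, fun m x => ?_⟩
  have hTle : ∀ v, ‖T v‖ ≤ C := fun v => by
    have hv := hC 1 fun _ => v
    have hw : weakSum 𝕜 p (fun _ : Fin 1 => v) ≤ 1 := by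
      simpa using weakSum_le_sum_prod_norm (fun _ : Fin 1 => v) hp.le
    rw [Fin.sum_univ_one, ← Real.rpow_mul (norm_nonneg _), mul_one_div_cancel hp.ne',
      Real.rpow_one] at hv
    calc ‖T v‖ ≤ C * weakSum 𝕜 p (fun _ : Fin 1 => v) ^ (1 / p) := hv
      _ ≤ C * 1 ^ (1 / p) := by gcongr; exact weakSum_nonneg _
      _ = C := by rw [Real.one_rpow, mul_one]
  have hm : (m : ℝ) ≤ weakSum 𝕜 q x := by
    simpa using sum_norm_rpow_le_weakSum x hq.le
      ⟨ContinuousMultilinearMap.constOfIsEmpty 𝕜 X 1, by simp⟩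
  calc (∑ j, ‖T (x j)‖ ^ q) ^ (1 / q) ≤ (m * C ^ q) ^ (1 / q) := by
        gcongr
        calc ∑ j, ‖T (x j)‖ ^ q ≤ ∑ _j : Fin m, C ^ q := by gcongr; exact hTle _
          _ = m * C ^ q := by simp
    _ ≤ (weakSum 𝕜 q x * C ^ q) ^ (1 / q) := by gcongr
    _ = C * weakSum 𝕜 q x ^ (1 / q) := by
        rw [Real.mul_rpow (weakSum_nonneg x) (by positivity), ← Real.rpow_mul hC0,
          mul_one_div_cancel hq.ne', Real.rpow_one, mul_comm]

theorem of_lt [Nonempty (Fin n)] (hp : 0 < p) (hpq : p < q)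
    (hT : IsStronglySumming p p T) : IsStronglySumming q q T := by
  obtain ⟨C, hC0, hC⟩ := isStronglySumming_iff.1 hT
  refine isStronglySumming_iff.2 ⟨C, hC0, fun m x => ?_⟩
  obtain ⟨i₀⟩ := ‹Nonempty (Fin n)›
  have hq : 0 < q := hp.trans hpq
  set y : Fin m → ∀ i, X i := fun j =>
    Function.update (x j) i₀ (((‖T (x j)‖ ^ ((q - p) / p) : ℝ) : 𝕜) • x j i₀)
  have hTy : ∑ j, ‖T (y j)‖ ^ p = ∑ j, ‖T (x j)‖ ^ q := Finset.sum_congr rfl fun j _ => by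
    rw [T.norm_map_update_rpow_smul_rpow (x j) i₀ (norm_nonneg _) hp.ne',
      ← Real.rpow_add_of_nonneg (norm_nonneg _) (sub_nonneg.2 hpq.le) hp.le, sub_add_cancel]
  have hy : weakSum 𝕜 p y ≤ (∑ j, ‖T (x j)‖ ^ q) ^ ((q - p) / q) * weakSum 𝕜 q x ^ (p / q) := by
    refine ciSup_le fun φ => ?_
    calc ∑ j, ‖φ.1 (y j)‖ ^ p = ∑ j, ‖T (x j)‖ ^ (q - p) * ‖φ.1 (x j)‖ ^ p :=
          Finset.sum_congr rfl fun j _ =>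
            φ.1.norm_map_update_rpow_smul_rpow (x j) i₀ (norm_nonneg _) hp.ne' _
      _ ≤ (∑ j, ‖T (x j)‖ ^ q) ^ ((q - p) / q) * (∑ j, ‖φ.1 (x j)‖ ^ q) ^ (p / q) :=
          Real.sum_rpow_sub_mul_rpow_le _ hp hpq (fun _ _ => norm_nonneg _) fun _ _ => norm_nonneg _
      _ ≤ _ := by gcongr; exact sum_norm_rpow_le_weakSum x hq.le φ
  refine Real.rpow_one_div_le_of_le_mul_rpow hp hpq (by positivity) (weakSum_nonneg x) hC0 ?_
  calc (∑ j, ‖T (x j)‖ ^ q) ^ (1 / p) = (∑ j, ‖T (y j)‖ ^ p) ^ (1 / p) := by rw [hTy]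
    _ ≤ C * weakSum 𝕜 p y ^ (1 / p) := hC m y
    _ ≤ _ := by gcongr; exact weakSum_nonneg _

end IsStronglySumming

theorem stmt5_general {𝕜 : Type*} [RCLike 𝕜] {n : ℕ} {X : Fin n → Type*}
    [∀ i, NormedAddCommGroup (X i)] [∀ i, NormedSpace 𝕜 (X i)]
    {Y : Type*} [NormedAddCommGroup Y] [NormedSpace 𝕜 Y]
    (p q : ℝ) (hp : 1 ≤ p) (hpq : p ≤ q)
    (T : ContinuousMultilinearMap 𝕜 X Y)
    (hT : IsStronglySumming p p T) :
    IsStronglySumming q q T := by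
  rcases hpq.eq_or_lt with rfl | hpq
  · exact hT
  have hp : 0 < p := zero_lt_one.trans_le hp
  rcases isEmpty_or_nonempty (Fin n)
  · exact hT.of_isEmpty hp (hp.trans hpq)
  · exact hT.of_lt hp hpq

/-- If `1 ≤ p ≤ q < ∞` and `X₁, …, X_n, Y` are Banach spaces, every
continuous `n`-linear strongly `(p,p)`-summing map is strongly `(q,q)`-summing. -/
theorem stmt5 {𝕜 : Type*} [RCLike 𝕜] {n : ℕ} {X : Fin n → Type*}
    [∀ i, NormedAddCommGroup (X i)] [∀ i, NormedSpace 𝕜 (X i)]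
    [∀ i, CompleteSpace (X i)]
    {Y : Type*} [NormedAddCommGroup Y] [NormedSpace 𝕜 Y] [CompleteSpace Y]
    (p q : ℝ) (hp : 1 ≤ p) (hpq : p ≤ q)
    (T : ContinuousMultilinearMap 𝕜 X Y)
    (hT : IsStronglySumming p p T) :
    IsStronglySumming q q T :=
  stmt5_general p q hp hpq T hT
end

section
/- Let p₁, p₂, q₁, q₂ satisfy condition (★) and let X₁, …, X_n, Y be Banach spaces. Every continuous n-linear map T : X₁ × ⋯ × X_n → Y which is (q₁,p₁)-semi-integral is (q₂,p₂)-semi-integral. -/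
open scoped BigOperators

/-!
To pass from `(q₁, p₁)` to `(q₂, p₂)`, apply the `(q₁, p₁)`-inequality to the family whose first
coordinates are rescaled by `σⱼ = ‖T xⱼ‖ ^ (q₂ t)`, `t = 1/q₁ - 1/q₂`. Its left side becomes
`A ^ (1/q₁)` with `A = ∑ ‖T xⱼ‖ ^ q₂`. On the right side, Hölder's inequality with
`1/r = 1/p₁ - 1/p₂` splits off `(∑ σⱼ ^ r) ^ (1/r)`, which is at most `A ^ t` because (★) says
exactly that `t r ≥ 1`. Cancelling `A ^ t` leaves the `(q₂, p₂)`-inequality with the same constant.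
When `p₁ = p₂` it suffices that `ℓ_q`-norms decrease in `q`, and when `n = 0` every family is
constant, so both inequalities compare powers of the number of its members.
-/

/-- A continuous `n`-linear map `T : X₁ × ⋯ × X_n → Y` is `(q,p)`-semi-integral if there is
`C ≥ 0` with `(∑ⱼ ‖T(xⱼ¹,…,xⱼⁿ)‖^q)^{1/q} ≤ C (sup_{φᵢ ∈ B_{Xᵢ*}} ∑ⱼ |φ₁(xⱼ¹)⋯φₙ(xⱼⁿ)|^p)^{1/p}`
for all finite families. -/
def IsSemiIntegral {𝕜 : Type*} [RCLike 𝕜] {n : ℕ} {X : Fin n → Type*}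
    [∀ i, NormedAddCommGroup (X i)] [∀ i, NormedSpace 𝕜 (X i)]
    {Y : Type*} [NormedAddCommGroup Y] [NormedSpace 𝕜 Y]
    (q p : ℝ) (T : ContinuousMultilinearMap 𝕜 X Y) : Prop :=
  ∃ C : ℝ, 0 ≤ C ∧ ∀ (m : ℕ) (x : Fin m → ∀ i, X i),
    (∑ j, ‖T (x j)‖ ^ q) ^ (1 / q) ≤
      C * (⨆ φ : ∀ i, {φ : X i →L[𝕜] 𝕜 // ‖φ‖ ≤ 1},
        ∑ j, (∏ i, ‖(φ i).1 (x j i)‖) ^ p) ^ (1 / p)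

open Finset Set

theorem sum_rpow_le_rpow_sum_s6 {ι : Type*} (s : Finset ι) {f : ι → ℝ} (hf : ∀ i ∈ s, 0 ≤ f i)
    {e : ℝ} (he : 1 ≤ e) : ∑ i ∈ s, f i ^ e ≤ (∑ i ∈ s, f i) ^ e := by
  induction s using Finset.cons_induction with
  | empty => simp [Real.zero_rpow (by linarith : e ≠ 0)]
  | cons a s ha ih =>
    rw [forall_mem_cons] at hf
    rw [sum_cons, sum_cons]
    exact (add_le_add_right (ih hf.2) _).trans
      (Real.add_rpow_le_rpow_add hf.1 (sum_nonneg hf.2) he)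

theorem rpow_sum_rpow_le_of_le {ι : Type*} (s : Finset ι) {f : ι → ℝ} (hf : ∀ i ∈ s, 0 ≤ f i)
    {p q : ℝ} (hp : 0 < p) (hpq : p ≤ q) :
    (∑ i ∈ s, f i ^ q) ^ (1 / q) ≤ (∑ i ∈ s, f i ^ p) ^ (1 / p) := by
  have hsum : ∑ i ∈ s, f i ^ q ≤ (∑ i ∈ s, f i ^ p) ^ (q / p) :=
    calc ∑ i ∈ s, f i ^ q = ∑ i ∈ s, (f i ^ p) ^ (q / p) := by
          refine sum_congr rfl fun i hi => ?_
          rw [← Real.rpow_mul (hf i hi), mul_div_cancel₀ _ hp.ne']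
      _ ≤ _ := sum_rpow_le_rpow_sum_s6 s (fun i hi => Real.rpow_nonneg (hf i hi) _)
          ((one_le_div hp).2 hpq)
  have hq : 0 < q := hp.trans_le hpq
  calc (∑ i ∈ s, f i ^ q) ^ (1 / q) ≤ ((∑ i ∈ s, f i ^ p) ^ (q / p)) ^ (1 / q) := by
        gcongr
        exact sum_nonneg fun i hi => Real.rpow_nonneg (hf i hi) _
    _ = (∑ i ∈ s, f i ^ p) ^ (1 / p) := by
        rw [← Real.rpow_mul (sum_nonneg fun i hi => Real.rpow_nonneg (hf i hi) _)]
        congr 1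
        field_simp

theorem rpow_mul_le_mul_rpow_of_forall_nat {p₁ p₂ q₁ q₂ c C : ℝ}
    (hstar : 1 / p₁ - 1 / q₁ ≤ 1 / p₂ - 1 / q₂) (hC : 0 ≤ C) (hq₂ : q₂ ≠ 0)
    (h : ∀ m : ℕ, (m : ℝ) ^ (1 / q₁) * c ≤ C * (m : ℝ) ^ (1 / p₁)) (m : ℕ) :
    (m : ℝ) ^ (1 / q₂) * c ≤ C * (m : ℝ) ^ (1 / p₂) := by
  rcases m.eq_zero_or_pos with rfl | hm
  · rw [Nat.cast_zero, Real.zero_rpow (one_div_ne_zero hq₂), zero_mul]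
    positivity
  have hm1 : (1 : ℝ) ≤ m := Nat.one_le_cast.2 hm
  have hm0 : (0 : ℝ) < m := by linarith
  calc (m : ℝ) ^ (1 / q₂) * c = (m : ℝ) ^ (1 / q₂ - 1 / q₁) * ((m : ℝ) ^ (1 / q₁) * c) := by
        rw [← mul_assoc, ← Real.rpow_add hm0, sub_add_cancel]
    _ ≤ (m : ℝ) ^ (1 / q₂ - 1 / q₁) * (C * (m : ℝ) ^ (1 / p₁)) :=
        mul_le_mul_of_nonneg_left (h m) (by positivity)
    _ = C * (m : ℝ) ^ (1 / q₂ - 1 / q₁ + 1 / p₁) := by rw [Real.rpow_add hm0]; ring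
    _ ≤ C * (m : ℝ) ^ (1 / p₂) := by gcongr; linarith

theorem rpow_mul_self_rpow_eq_rpow {a q₁ q₂ : ℝ} (ha : 0 ≤ a) (hq₁ : 0 < q₁) (hq₂ : 0 < q₂) :
    (a ^ (q₂ * (1 / q₁ - 1 / q₂)) * a) ^ q₁ = a ^ q₂ := by
  have he : q₂ * (1 / q₁ - 1 / q₂) + 1 = q₂ / q₁ := by field_simp; ring
  rw [← Real.rpow_add_one' ha (by rw [he]; positivity), ← Real.rpow_mul ha, he,
    div_mul_cancel₀ _ hq₁.ne']

theorem iSup_sum_mul_rpow_le {ι Φ : Type*} [Fintype ι] {p q r : ℝ} (hr : r.HolderTriple q p)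
    {σ : ι → ℝ} {u : Φ → ι → ℝ} (hσ : ∀ j, 0 ≤ σ j) (hu : ∀ φ j, 0 ≤ u φ j)
    (hbdd : BddAbove (range fun φ => ∑ j, u φ j ^ q)) :
    ⨆ φ, ∑ j, (σ j * u φ j) ^ p ≤
      (∑ j, σ j ^ r) ^ (p / r) * (⨆ φ, ∑ j, u φ j ^ q) ^ (p / q) := by
  have := hr.pos
  have := hr.pos'
  have := hr.symm.pos
  have hσr : 0 ≤ ∑ j, σ j ^ r := sum_nonneg fun j _ => Real.rpow_nonneg (hσ j) r
  have huq : ∀ φ, 0 ≤ ∑ j, u φ j ^ q := fun φ => sum_nonneg fun j _ => Real.rpow_nonneg (hu φ j) q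
  refine Real.iSup_le (fun φ => ?_) (by have := Real.iSup_nonneg huq; positivity)
  calc ∑ j, (σ j * u φ j) ^ p
      ≤ (∑ j, σ j ^ r) ^ (p / r) * (∑ j, u φ j ^ q) ^ (p / q) :=
        Real.Lr_rpow_le_Lp_mul_Lq_of_nonneg _ hr (fun j _ => hσ j) fun j _ => hu φ j
    _ ≤ (∑ j, σ j ^ r) ^ (p / r) * (⨆ φ, ∑ j, u φ j ^ q) ^ (p / q) := by
        have := huq φ
        gcongr
        exact le_ciSup hbdd φ

theorem rpow_sum_rpow_le_of_forall_weighted {ι Φ : Type*} [Fintype ι]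
    {p₁ p₂ q₁ q₂ C : ℝ} (hp₁ : 0 < p₁) (hp₁₂ : p₁ < p₂) (hq₁ : 0 < q₁) (hq₂ : 0 < q₂)
    (hstar : 1 / p₁ - 1 / q₁ ≤ 1 / p₂ - 1 / q₂) (hC : 0 ≤ C)
    {a : ι → ℝ} {u : Φ → ι → ℝ} (ha : ∀ j, 0 ≤ a j) (hu : ∀ φ j, 0 ≤ u φ j)
    (hbdd : BddAbove (range fun φ => ∑ j, u φ j ^ p₂))
    (h : ∀ σ : ι → ℝ, (∀ j, 0 ≤ σ j) →
      (∑ j, (σ j * a j) ^ q₁) ^ (1 / q₁) ≤ C * (⨆ φ, ∑ j, (σ j * u φ j) ^ p₁) ^ (1 / p₁)) :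
    (∑ j, a j ^ q₂) ^ (1 / q₂) ≤ C * (⨆ φ, ∑ j, u φ j ^ p₂) ^ (1 / p₂) := by
  set A := ∑ j, a j ^ q₂
  set S := ⨆ φ, ∑ j, u φ j ^ p₂
  set t := 1 / q₁ - 1 / q₂
  set r := (p₁⁻¹ - p₂⁻¹)⁻¹
  have hA : 0 ≤ A := sum_nonneg fun j _ => Real.rpow_nonneg (ha j) _
  have hS : 0 ≤ S := Real.iSup_nonneg fun φ => sum_nonneg fun j _ => Real.rpow_nonneg (hu φ j) _
  have hr : r.HolderTriple p₂ p₁ :=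
    ⟨by simp [r], inv_pos.2 (sub_pos.2 (inv_strictAnti₀ hp₁ hp₁₂)), hp₁.trans hp₁₂⟩
  have htr : 1 ≤ t * r := by
    have ht : p₁⁻¹ - p₂⁻¹ ≤ t := by simp only [t, one_div] at hstar ⊢; linarith
    calc 1 = (p₁⁻¹ - p₂⁻¹) * r := (mul_inv_cancel₀ (inv_pos.1 hr.pos).ne').symm
      _ ≤ t * r := by gcongr; exact hr.pos.le
  set σ : ι → ℝ := fun j => a j ^ (q₂ * t)
  have hσ : ∀ j, 0 ≤ σ j := fun j => Real.rpow_nonneg (ha j) _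
  have hσa : ∀ j, (σ j * a j) ^ q₁ = a j ^ q₂ := fun j =>
    rpow_mul_self_rpow_eq_rpow (ha j) hq₁ hq₂
  have hσr : ∑ j, σ j ^ r ≤ A ^ (t * r) :=
    calc ∑ j, σ j ^ r = ∑ j, (a j ^ q₂) ^ (t * r) := by
          refine sum_congr rfl fun j _ => ?_
          rw [← Real.rpow_mul (ha j), ← Real.rpow_mul (ha j), mul_assoc]
      _ ≤ A ^ (t * r) := sum_rpow_le_rpow_sum_s6 _ (fun j _ => Real.rpow_nonneg (ha j) _) htr
  have hmain : A ^ t * A ^ (1 / q₂) ≤ A ^ t * (C * S ^ (1 / p₂)) :=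
    calc A ^ t * A ^ (1 / q₂) = (∑ j, (σ j * a j) ^ q₁) ^ (1 / q₁) := by
          rw [← Real.rpow_add' hA (by simp [t]; positivity)]
          simp only [hσa, t, sub_add_cancel, A]
      _ ≤ C * (⨆ φ, ∑ j, (σ j * u φ j) ^ p₁) ^ (1 / p₁) := h σ hσ
      _ ≤ C * ((A ^ (t * r)) ^ (p₁ / r) * S ^ (p₁ / p₂)) ^ (1 / p₁) := by
          have := hr.pos
          gcongr
          · exact Real.iSup_nonneg fun φ => sum_nonneg fun j _ =>
              Real.rpow_nonneg (mul_nonneg (hσ j) (hu φ j)) _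
          · refine (iSup_sum_mul_rpow_le hr hσ hu hbdd).trans ?_
            gcongr
            exact sum_nonneg fun j _ => Real.rpow_nonneg (hσ j) r
      _ = A ^ t * (C * S ^ (1 / p₂)) := by
          rw [← Real.rpow_mul hA, Real.mul_rpow (by positivity) (by positivity),
            ← Real.rpow_mul hA, ← Real.rpow_mul hS]
          field_simp [hr.pos.ne']
  rcases hA.eq_or_lt with hA0 | hApos
  · rw [← hA0, Real.zero_rpow (by positivity)]
    positivity
  · exact le_of_mul_le_mul_left hmain (Real.rpow_pos_of_pos hApos t)

section

variable {𝕜 : Type*} [RCLike 𝕜] {n : ℕ} {X : Fin n → Type*}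
  [∀ i, NormedAddCommGroup (X i)] [∀ i, NormedSpace 𝕜 (X i)]
  {Y : Type*} [NormedAddCommGroup Y] [NormedSpace 𝕜 Y]

theorem bddAbove_range_sum_prod_norm_rpow {m : ℕ} (x : Fin m → ∀ i, X i) {p : ℝ} (hp : 0 ≤ p) :
    BddAbove (range fun φ : ∀ i, {φ : X i →L[𝕜] 𝕜 // ‖φ‖ ≤ 1} =>
      ∑ j, (∏ i, ‖(φ i).1 (x j i)‖) ^ p) := by
  refine ⟨∑ j, (∏ i, ‖x j i‖) ^ p, ?_⟩
  rintro _ ⟨φ, rfl⟩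
  dsimp only
  gcongr with j _ i
  exact (φ i).1.le_of_opNorm_le (φ i).2 _ |>.trans_eq (one_mul _)

theorem IsSemiIntegral.mono {q₁ q₂ p : ℝ} {T : ContinuousMultilinearMap 𝕜 X Y}
    (hT : IsSemiIntegral q₁ p T) (hq₁ : 0 < q₁) (hq₁₂ : q₁ ≤ q₂) : IsSemiIntegral q₂ p T := by
  obtain ⟨C, hC, hCx⟩ := hT
  exact ⟨C, hC, fun m x =>
    (rpow_sum_rpow_le_of_le _ (fun j _ => norm_nonneg _) hq₁ hq₁₂).trans (hCx m x)⟩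

theorem IsSemiIntegral.exists_weighted_bound [NeZero n] {q p : ℝ}
    {T : ContinuousMultilinearMap 𝕜 X Y} (hT : IsSemiIntegral q p T) :
    ∃ C, 0 ≤ C ∧ ∀ (m : ℕ) (x : Fin m → ∀ i, X i) (σ : Fin m → ℝ), (∀ j, 0 ≤ σ j) →
      (∑ j, (σ j * ‖T (x j)‖) ^ q) ^ (1 / q) ≤
        C * (⨆ φ : ∀ i, {φ : X i →L[𝕜] 𝕜 // ‖φ‖ ≤ 1},
          ∑ j, (σ j * ∏ i, ‖(φ i).1 (x j i)‖) ^ p) ^ (1 / p) := by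
  obtain ⟨C, hC, hCx⟩ := hT
  refine ⟨C, hC, fun m x σ hσ => ?_⟩
  let c : Fin m → Fin n → 𝕜 := fun j => Pi.mulSingle 0 (σ j : 𝕜)
  have hc : ∀ j, ∏ i, ‖c j i‖ = σ j := fun j => by
    rw [← norm_prod, Fintype.prod_pi_mulSingle', RCLike.norm_ofReal, abs_of_nonneg (hσ j)]
  simpa only [T.map_smul_univ, norm_smul, norm_prod, hc, map_smul, prod_mul_distrib] using
    hCx m fun j i => c j i • x j i

theorem isSemiIntegral_fin_zero_iff {X : Fin 0 → Type*}
    [∀ i, NormedAddCommGroup (X i)] [∀ i, NormedSpace 𝕜 (X i)]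
    {q p : ℝ} (hq : q ≠ 0) (T : ContinuousMultilinearMap 𝕜 X Y) :
    IsSemiIntegral q p T ↔
      ∃ C, 0 ≤ C ∧ ∀ m : ℕ, (m : ℝ) ^ (1 / q) * ‖T 0‖ ≤ C * (m : ℝ) ^ (1 / p) := by
  have hx : ∀ {m : ℕ} (x : Fin m → ∀ i, X i),
      (∑ j, ‖T (x j)‖ ^ q) ^ (1 / q) = (m : ℝ) ^ (1 / q) * ‖T 0‖ := fun x => by
    simp only [Subsingleton.elim _ (0 : ∀ i, X i), sum_const, card_univ, Fintype.card_fin,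
      nsmul_eq_mul]
    rw [Real.mul_rpow (by positivity) (by positivity), ← Real.rpow_mul (norm_nonneg _),
      mul_one_div_cancel hq, Real.rpow_one]
  have hφ : ∀ {m : ℕ} (x : Fin m → ∀ i, X i),
      (⨆ φ : ∀ i, {φ : X i →L[𝕜] 𝕜 // ‖φ‖ ≤ 1}, ∑ j, (∏ i, ‖(φ i).1 (x j i)‖) ^ p) = m :=
    fun x => by simp
  simp only [IsSemiIntegral, hx, hφ]
  exact ⟨fun ⟨C, hC, h⟩ => ⟨C, hC, fun m => h m 0⟩, fun ⟨C, hC, h⟩ => ⟨C, hC, fun m _ => h m⟩⟩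

end

theorem stmt6_general {𝕜 : Type*} [RCLike 𝕜] {n : ℕ} {X : Fin n → Type*}
    [∀ i, NormedAddCommGroup (X i)] [∀ i, NormedSpace 𝕜 (X i)]
    {Y : Type*} [NormedAddCommGroup Y] [NormedSpace 𝕜 Y]
    (p₁ p₂ q₁ q₂ : ℝ)
    (hp₁ : 1 ≤ p₁) (hp₁₂ : p₁ ≤ p₂) (hq₁ : 1 ≤ q₁) (hq₁₂ : q₁ ≤ q₂)
    (hstar : 1 / p₁ - 1 / q₁ ≤ 1 / p₂ - 1 / q₂)
    (T : ContinuousMultilinearMap 𝕜 X Y)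
    (hT : IsSemiIntegral q₁ p₁ T) :
    IsSemiIntegral q₂ p₂ T := by
  have hq₂ : 0 < q₂ := by linarith
  rcases hp₁₂.eq_or_lt with rfl | hp₁₂
  · exact hT.mono (by linarith) hq₁₂
  rcases n.eq_zero_or_pos with rfl | hn
  · rw [isSemiIntegral_fin_zero_iff (by linarith)] at hT
    obtain ⟨C, hC, hCm⟩ := hT
    rw [isSemiIntegral_fin_zero_iff hq₂.ne']
    exact ⟨C, hC, rpow_mul_le_mul_rpow_of_forall_nat hstar hC hq₂.ne' hCm⟩
  · have : NeZero n := ⟨hn.ne'⟩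
    obtain ⟨C, hC, hCw⟩ := hT.exists_weighted_bound
    exact ⟨C, hC, fun m x => rpow_sum_rpow_le_of_forall_weighted (by linarith) hp₁₂
      (by linarith) hq₂ hstar hC (fun j => norm_nonneg _)
      (fun φ j => prod_nonneg fun i _ => norm_nonneg _)
      (bddAbove_range_sum_prod_norm_rpow x (by linarith)) (hCw m x)⟩

/-- If `p₁, p₂, q₁, q₂` satisfy condition (★) and `X₁, …, X_n, Y` are
Banach spaces, every continuous `n`-linear `(q₁,p₁)`-semi-integral map is
`(q₂,p₂)`-semi-integral. -/
theorem stmt6 {𝕜 : Type*} [RCLike 𝕜] {n : ℕ} {X : Fin n → Type*}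
    [∀ i, NormedAddCommGroup (X i)] [∀ i, NormedSpace 𝕜 (X i)]
    [∀ i, CompleteSpace (X i)]
    {Y : Type*} [NormedAddCommGroup Y] [NormedSpace 𝕜 Y] [CompleteSpace Y]
    (p₁ p₂ q₁ q₂ : ℝ)
    (hp₁ : 1 ≤ p₁) (hp₁₂ : p₁ ≤ p₂) (hq₁ : 1 ≤ q₁) (hq₁₂ : q₁ ≤ q₂)
    (hpq₁ : p₁ ≤ q₁) (hpq₂ : p₂ ≤ q₂)
    (hstar : 1 / p₁ - 1 / q₁ ≤ 1 / p₂ - 1 / q₂)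
    (T : ContinuousMultilinearMap 𝕜 X Y)
    (hT : IsSemiIntegral q₁ p₁ T) :
    IsSemiIntegral q₂ p₂ T :=
  stmt6_general p₁ p₂ q₁ q₂ hp₁ hp₁₂ hq₁ hq₁₂ hstar T hT
end

section
/- Let p₁, p₂, q₁, q₂ satisfy condition (★) and let X₁, …, X_n, Y be Banach spaces. Every continuous n-linear map T : X₁ × ⋯ × X_n → Y which is strongly (q₁,p₁)-summing is strongly (q₂,p₂)-summing. -/
open scoped BigOperators

/-!
Rescaling a fixed coordinate of the `j`-th point by `λⱼ = ‖T xⱼ‖ ^ (q₂ / r)`, where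
`1 / r = 1 / q₁ - 1 / q₂`, turns `∑ ‖T xⱼ‖ ^ q₂ =: S` into `∑ ‖T (λ • x)ⱼ‖ ^ q₁`, while by
Hölder's inequality (applicable because of (★)) the weak `p₁`-sum of the rescaled points is at
most `S ^ (1 / r)` times the weak `p₂`-sum of the original ones. The `(q₁, p₁)`-estimate thus
gives `S ^ (1 / q₂) * S ^ (1 / r) ≤ C * S ^ (1 / r) * (weak p₂-sum) ^ (1 / p₂)`, and one divides
by `S ^ (1 / r)`. Without coordinates (`n = 0`) the map is constant and only `p₂ ≤ q₂` matters.
-/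

open Finset

namespace Real

variable {ι : Type*} (s : Finset ι) {f g : ι → ℝ}

theorem sum_rpow_le_rpow_sum_of_nonneg (hf : ∀ i ∈ s, 0 ≤ f i) {t : ℝ} (ht : 1 ≤ t) :
    ∑ i ∈ s, f i ^ t ≤ (∑ i ∈ s, f i) ^ t := by
  induction s using Finset.cons_induction with
  | empty => simp [zero_rpow (by positivity : t ≠ 0)]
  | cons a s ha ih =>
    simp only [forall_mem_cons] at hf
    rw [sum_cons, sum_cons]
    calc f a ^ t + ∑ i ∈ s, f i ^ t ≤ f a ^ t + (∑ i ∈ s, f i) ^ t := by gcongr; exact ih hf.2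
      _ ≤ (f a + ∑ i ∈ s, f i) ^ t :=
        add_rpow_le_rpow_add hf.1 (sum_nonneg hf.2) ht

theorem Lq_le_Lp_of_nonneg (hf : ∀ i ∈ s, 0 ≤ f i) {p q : ℝ} (hp : 0 < p) (hpq : p ≤ q) :
    (∑ i ∈ s, f i ^ q) ^ (1 / q) ≤ (∑ i ∈ s, f i ^ p) ^ (1 / p) := by
  have hq : 0 < q := hp.trans_le hpq
  have hsum : ∑ i ∈ s, f i ^ q ≤ (∑ i ∈ s, f i ^ p) ^ (q / p) := by
    calc ∑ i ∈ s, f i ^ q = ∑ i ∈ s, (f i ^ p) ^ (q / p) := by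
          refine sum_congr rfl fun i hi => ?_
          rw [← rpow_mul (hf i hi), mul_div_cancel₀ _ hp.ne']
      _ ≤ _ := sum_rpow_le_rpow_sum_of_nonneg s (fun i hi => rpow_nonneg (hf i hi) _)
          ((one_le_div hp).2 hpq)
  calc (∑ i ∈ s, f i ^ q) ^ (1 / q) ≤ ((∑ i ∈ s, f i ^ p) ^ (q / p)) ^ (1 / q) := by
        gcongr
        exact sum_nonneg fun i hi => rpow_nonneg (hf i hi) _
    _ = _ := by
        rw [← rpow_mul (sum_nonneg fun i hi => rpow_nonneg (hf i hi) _)]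
        congr 1
        field_simp

theorem Lr_le_Lp_mul_Lq_of_inv_le (hf : ∀ i ∈ s, 0 ≤ f i) (hg : ∀ i ∈ s, 0 ≤ g i)
    {p q r : ℝ} (hp : 0 < p) (hq : 0 < q) (hr : 0 < r) (hpqr : 1 / r ≤ 1 / p + 1 / q) :
    (∑ i ∈ s, (f i * g i) ^ r) ^ (1 / r) ≤
      (∑ i ∈ s, f i ^ p) ^ (1 / p) * (∑ i ∈ s, g i ^ q) ^ (1 / q) := by
  set t := (p⁻¹ + q⁻¹)⁻¹
  have ht : 0 < t := by positivity
  have htriple : p.HolderTriple q t := ⟨by simp [t], hp, hq⟩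
  have htr : t ≤ r := by
    rw [← inv_le_inv₀ hr ht]
    simpa [t] using hpqr
  have hfg : ∀ i ∈ s, 0 ≤ f i * g i := fun i hi => mul_nonneg (hf i hi) (hg i hi)
  refine (Lq_le_Lp_of_nonneg s hfg ht htr).trans ?_
  have hF : 0 ≤ ∑ i ∈ s, f i ^ p := sum_nonneg fun i hi => rpow_nonneg (hf i hi) _
  have hG : 0 ≤ ∑ i ∈ s, g i ^ q := sum_nonneg fun i hi => rpow_nonneg (hg i hi) _
  calc (∑ i ∈ s, (f i * g i) ^ t) ^ (1 / t)
      ≤ ((∑ i ∈ s, f i ^ p) ^ (t / p) * (∑ i ∈ s, g i ^ q) ^ (t / q)) ^ (1 / t) := by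
        gcongr
        · exact sum_nonneg fun i hi => rpow_nonneg (hfg i hi) _
        · exact Lr_rpow_le_Lp_mul_Lq_of_nonneg s htriple hf hg
    _ = _ := by
        rw [mul_rpow (by positivity) (by positivity), ← rpow_mul hF, ← rpow_mul hG]
        congr 2 <;> field_simp

end Real

theorem ContinuousMultilinearMap.norm_map_update_smul_self {𝕜 ι : Type*} [NormedField 𝕜]
    [DecidableEq ι] {E : ι → Type*} [∀ i, SeminormedAddCommGroup (E i)]
    [∀ i, NormedSpace 𝕜 (E i)] {G : Type*} [SeminormedAddCommGroup G] [NormedSpace 𝕜 G]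
    (f : ContinuousMultilinearMap 𝕜 E G) (v : ∀ i, E i) (i : ι) (c : 𝕜) :
    ‖f (Function.update v i (c • v i))‖ = ‖c‖ * ‖f v‖ := by
  rw [f.map_update_smul, Function.update_eq_self, norm_smul]

section WeakSum

variable (𝕜 : Type*) [RCLike 𝕜] {ι : Type*} [Fintype ι] {X : ι → Type*}
  [∀ i, NormedAddCommGroup (X i)] [∀ i, NormedSpace 𝕜 (X i)]

/-- The supremum occurring in `IsStronglySumming`, so that the latter unfolds to estimates against
`weakLpSum 𝕜 p x ^ (1 / p)`. -/
noncomputable def weakLpSum (p : ℝ) {m : ℕ} (x : Fin m → ∀ i, X i) : ℝ :=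
  ⨆ φ : {φ : ContinuousMultilinearMap 𝕜 X 𝕜 // ‖φ‖ ≤ 1}, ∑ j, ‖φ.1 (x j)‖ ^ p

variable {𝕜} {p : ℝ} {m : ℕ} (x : Fin m → ∀ i, X i)

theorem weakLpSum_nonneg : 0 ≤ weakLpSum 𝕜 p x :=
  Real.iSup_nonneg fun _ => sum_nonneg fun _ _ => Real.rpow_nonneg (norm_nonneg _) _

theorem sum_rpow_le_weakLpSum (hp : 0 ≤ p) (φ : ContinuousMultilinearMap 𝕜 X 𝕜)
    (hφ : ‖φ‖ ≤ 1) : ∑ j, ‖φ (x j)‖ ^ p ≤ weakLpSum 𝕜 p x := by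
  refine le_ciSup (f := fun φ : {φ : ContinuousMultilinearMap 𝕜 X 𝕜 // ‖φ‖ ≤ 1} =>
    ∑ j, ‖φ.1 (x j)‖ ^ p) ⟨∑ j, (∏ i, ‖x j i‖) ^ p, ?_⟩ ⟨φ, hφ⟩
  rintro _ ⟨ψ, rfl⟩
  refine sum_le_sum fun j _ => Real.rpow_le_rpow (norm_nonneg _) ?_ hp
  exact (ψ.1.le_opNorm _).trans (mul_le_of_le_one_left (by positivity) ψ.2)

theorem natCast_le_weakLpSum [IsEmpty ι] (hp : 0 ≤ p) : (m : ℝ) ≤ weakLpSum 𝕜 p x := by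
  simpa using sum_rpow_le_weakLpSum x hp (ContinuousMultilinearMap.constOfIsEmpty 𝕜 X 1)
    (by simp)

theorem weakLpSum_update_smul_rpow_le [DecidableEq ι] (i₀ : ι) {w : Fin m → ℝ}
    (hw : ∀ j, 0 ≤ w j) {p₁ p₂ r : ℝ} (hp₁ : 0 < p₁) (hp₂ : 0 < p₂) (hr : 0 < r)
    (hexp : 1 / p₁ ≤ 1 / r + 1 / p₂) :
    weakLpSum 𝕜 p₁ (fun j => Function.update (x j) i₀ ((w j : 𝕜) • x j i₀)) ^ (1 / p₁) ≤
      (∑ j, w j ^ r) ^ (1 / r) * weakLpSum 𝕜 p₂ x ^ (1 / p₂) := by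
  have : Nonempty {φ : ContinuousMultilinearMap 𝕜 X 𝕜 // ‖φ‖ ≤ 1} := ⟨⟨0, by simp⟩⟩
  have hwr : 0 ≤ ∑ j, w j ^ r := sum_nonneg fun j _ => Real.rpow_nonneg (hw j) r
  have hR : 0 ≤ (∑ j, w j ^ r) ^ (1 / r) * weakLpSum 𝕜 p₂ x ^ (1 / p₂) :=
    mul_nonneg (Real.rpow_nonneg hwr _) (Real.rpow_nonneg (weakLpSum_nonneg x) _)
  rw [one_div p₁, Real.rpow_inv_le_iff_of_pos (weakLpSum_nonneg _) hR hp₁]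
  refine ciSup_le fun φ => ?_
  rw [← Real.rpow_inv_le_iff_of_pos (sum_nonneg fun _ _ => by positivity) hR hp₁, ← one_div]
  calc (∑ j, ‖φ.1 (Function.update (x j) i₀ ((w j : 𝕜) • x j i₀))‖ ^ p₁) ^ (1 / p₁)
      = (∑ j, (w j * ‖φ.1 (x j)‖) ^ p₁) ^ (1 / p₁) := by
        simp_rw [φ.1.norm_map_update_smul_self, RCLike.norm_ofReal, abs_of_nonneg (hw _)]
    _ ≤ (∑ j, w j ^ r) ^ (1 / r) * (∑ j, ‖φ.1 (x j)‖ ^ p₂) ^ (1 / p₂) :=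
        Real.Lr_le_Lp_mul_Lq_of_inv_le _ (fun j _ => hw j) (fun _ _ => norm_nonneg _) hr hp₂ hp₁
          hexp
    _ ≤ (∑ j, w j ^ r) ^ (1 / r) * weakLpSum 𝕜 p₂ x ^ (1 / p₂) := by
        gcongr
        exact sum_rpow_le_weakLpSum x hp₂.le φ.1 φ.2

end WeakSum

section StronglySumming

variable {𝕜 : Type*} [RCLike 𝕜] {n : ℕ} {X : Fin n → Type*}
  [∀ i, NormedAddCommGroup (X i)] [∀ i, NormedSpace 𝕜 (X i)]
  {Y : Type*} [NormedAddCommGroup Y] [NormedSpace 𝕜 Y]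

theorem isStronglySumming_of_isEmpty [IsEmpty (Fin n)] (T : ContinuousMultilinearMap 𝕜 X Y)
    {p q : ℝ} (hp : 0 < p) (hpq : p ≤ q) : IsStronglySumming q p T := by
  have hq : 0 < q := hp.trans_le hpq
  refine ⟨‖T‖, norm_nonneg _, fun m x => ?_⟩
  change _ ≤ ‖T‖ * weakLpSum 𝕜 p x ^ (1 / p)
  have hW := weakLpSum_nonneg (𝕜 := 𝕜) (p := p) x
  rcases m.eq_zero_or_pos with rfl | hm
  · simp only [univ_eq_empty, sum_empty, Real.zero_rpow (one_div_pos.2 hq).ne']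
    positivity
  have hTx : ∀ j, ‖T (x j)‖ ≤ ‖T‖ := fun j => by simpa using T.le_opNorm (x j)
  calc (∑ j, ‖T (x j)‖ ^ q) ^ (1 / q) ≤ (m * ‖T‖ ^ q) ^ (1 / q) := by
        gcongr
        simpa using sum_le_sum fun j (_ : j ∈ univ) =>
          Real.rpow_le_rpow (norm_nonneg _) (hTx j) hq.le
    _ = m ^ (1 / q) * ‖T‖ := by
        rw [Real.mul_rpow (by positivity) (by positivity), ← Real.rpow_mul (norm_nonneg _),
          mul_one_div_cancel hq.ne', Real.rpow_one]
    _ ≤ weakLpSum 𝕜 p x ^ (1 / p) * ‖T‖ := by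
        gcongr
        calc (m : ℝ) ^ (1 / q) ≤ m ^ (1 / p) :=
              Real.rpow_le_rpow_of_exponent_le (by exact_mod_cast hm)
                (one_div_le_one_div_of_le hp hpq)
          _ ≤ weakLpSum 𝕜 p x ^ (1 / p) := by gcongr; exact natCast_le_weakLpSum x hp.le
    _ = ‖T‖ * weakLpSum 𝕜 p x ^ (1 / p) := mul_comm _ _

theorem IsStronglySumming.of_lt_s7 (i₀ : Fin n) {T : ContinuousMultilinearMap 𝕜 X Y}
    {p₁ p₂ q₁ q₂ : ℝ} (hp₁ : 0 < p₁) (hp₂ : 0 < p₂) (hq₁ : 0 < q₁) (hq : q₁ < q₂)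
    (hstar : 1 / p₁ - 1 / q₁ ≤ 1 / p₂ - 1 / q₂) (hT : IsStronglySumming q₁ p₁ T) :
    IsStronglySumming q₂ p₂ T := by
  obtain ⟨C, hC0, hC⟩ := hT
  refine ⟨C, hC0, fun m x => ?_⟩
  change _ ≤ C * weakLpSum 𝕜 p₂ x ^ (1 / p₂)
  have hq₂ : 0 < q₂ := hq₁.trans hq
  set t : Fin m → ℝ := fun j => ‖T (x j)‖
  set S := ∑ j, t j ^ q₂
  have hS0 : 0 ≤ S := sum_nonneg fun j _ => Real.rpow_nonneg (norm_nonneg _) q₂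
  rcases hS0.eq_or_lt with hS | hS
  · rw [← hS, Real.zero_rpow (one_div_pos.2 hq₂).ne']
    exact mul_nonneg hC0 (Real.rpow_nonneg (weakLpSum_nonneg x) _)
  set r := (1 / q₁ - 1 / q₂)⁻¹
  have hr_inv : 1 / r = 1 / q₁ - 1 / q₂ := by rw [one_div r, inv_inv]
  have hr : 0 < r := inv_pos.2 (sub_pos.2 (one_div_lt_one_div_of_lt hq₁ hq))
  set w : Fin m → ℝ := fun j => t j ^ (q₂ / r)
  have hw : ∀ j, 0 ≤ w j := fun j => Real.rpow_nonneg (norm_nonneg _) _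
  have hw_rpow : ∀ j, w j ^ r = t j ^ q₂ := fun j => by
    rw [← Real.rpow_mul (norm_nonneg _), div_mul_cancel₀ _ hr.ne']
  have hwt_rpow : ∀ j, (w j * t j) ^ q₁ = t j ^ q₂ := fun j => by
    have hexp : (q₂ / r + 1) * q₁ = q₂ := by
      rw [div_eq_mul_one_div q₂ r, hr_inv]; field_simp; ring
    rw [← Real.rpow_add_one' (norm_nonneg _) (by positivity), ← Real.rpow_mul (norm_nonneg _),
      hexp]
  set x' : Fin m → ∀ i, X i := fun j => Function.update (x j) i₀ ((w j : 𝕜) • x j i₀)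
  have hTx' : ∑ j, ‖T (x' j)‖ ^ q₁ = S := by
    refine sum_congr rfl fun j _ => ?_
    rw [T.norm_map_update_smul_self, RCLike.norm_ofReal, abs_of_nonneg (hw j), hwt_rpow]
  have hrescale : weakLpSum 𝕜 p₁ x' ^ (1 / p₁) ≤ S ^ (1 / r) * weakLpSum 𝕜 p₂ x ^ (1 / p₂) := by
    simpa only [hw_rpow] using
      weakLpSum_update_smul_rpow_le x i₀ hw hp₁ hp₂ hr (by rw [hr_inv]; linarith)
  have hsplit : S ^ (1 / q₁) = S ^ (1 / q₂) * S ^ (1 / r) := by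
    rw [← Real.rpow_add hS, hr_inv, add_sub_cancel]
  have key : S ^ (1 / q₂) * S ^ (1 / r) ≤ C * weakLpSum 𝕜 p₂ x ^ (1 / p₂) * S ^ (1 / r) :=
    calc S ^ (1 / q₂) * S ^ (1 / r) = (∑ j, ‖T (x' j)‖ ^ q₁) ^ (1 / q₁) := by rw [hTx', hsplit]
      _ ≤ C * weakLpSum 𝕜 p₁ x' ^ (1 / p₁) := hC m x'
      _ ≤ C * (S ^ (1 / r) * weakLpSum 𝕜 p₂ x ^ (1 / p₂)) := by gcongr
      _ = C * weakLpSum 𝕜 p₂ x ^ (1 / p₂) * S ^ (1 / r) := by ring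
  exact le_of_mul_le_mul_right key (Real.rpow_pos_of_pos hS _)

end StronglySumming

theorem stmt7_general {𝕜 : Type*} [RCLike 𝕜] {n : ℕ} {X : Fin n → Type*}
    [∀ i, NormedAddCommGroup (X i)] [∀ i, NormedSpace 𝕜 (X i)]
    {Y : Type*} [NormedAddCommGroup Y] [NormedSpace 𝕜 Y]
    (p₁ p₂ q₁ q₂ : ℝ)
    (hp₁ : 1 ≤ p₁) (hp₁₂ : p₁ ≤ p₂) (hq₁ : 1 ≤ q₁) (hq₁₂ : q₁ ≤ q₂)
    (hpq₂ : p₂ ≤ q₂)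
    (hstar : 1 / p₁ - 1 / q₁ ≤ 1 / p₂ - 1 / q₂)
    (T : ContinuousMultilinearMap 𝕜 X Y)
    (hT : IsStronglySumming q₁ p₁ T) :
    IsStronglySumming q₂ p₂ T := by
  have hp₁0 : 0 < p₁ := by linarith
  have hp₂0 : 0 < p₂ := by linarith
  rcases isEmpty_or_nonempty (Fin n) with hn | ⟨⟨i₀⟩⟩
  · exact isStronglySumming_of_isEmpty T hp₂0 hpq₂
  rcases hq₁₂.eq_or_lt with rfl | hq
  · obtain rfl : p₁ = p₂ :=
      le_antisymm hp₁₂ ((one_div_le_one_div hp₁0 hp₂0).1 (by linarith))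
    exact hT
  · exact hT.of_lt_s7 i₀ hp₁0 hp₂0 (by linarith) hq hstar

/-- If `p₁, p₂, q₁, q₂` satisfy condition (★) and `X₁, …, X_n, Y` are
Banach spaces, every continuous `n`-linear strongly `(q₁,p₁)`-summing map is strongly
`(q₂,p₂)`-summing. -/
theorem stmt7 {𝕜 : Type*} [RCLike 𝕜] {n : ℕ} {X : Fin n → Type*}
    [∀ i, NormedAddCommGroup (X i)] [∀ i, NormedSpace 𝕜 (X i)]
    [∀ i, CompleteSpace (X i)]
    {Y : Type*} [NormedAddCommGroup Y] [NormedSpace 𝕜 Y] [CompleteSpace Y]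
    (p₁ p₂ q₁ q₂ : ℝ)
    (hp₁ : 1 ≤ p₁) (hp₁₂ : p₁ ≤ p₂) (hq₁ : 1 ≤ q₁) (hq₁₂ : q₁ ≤ q₂)
    (hpq₁ : p₁ ≤ q₁) (hpq₂ : p₂ ≤ q₂)
    (hstar : 1 / p₁ - 1 / q₁ ≤ 1 / p₂ - 1 / q₂)
    (T : ContinuousMultilinearMap 𝕜 X Y)
    (hT : IsStronglySumming q₁ p₁ T) :
    IsStronglySumming q₂ p₂ T :=
  stmt7_general p₁ p₂ q₁ q₂ hp₁ hp₁₂ hq₁ hq₁₂ hpq₂ hstar T hT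
end

section
/- Let X₁, …, X_n be Banach spaces, let A : X₁ × ⋯ × X_n → [0,∞) be an arbitrary map, let 0 < q₁, …, q_n < ∞ and define q by 1/q = Σ_{k=1}^n 1/q_k. If there exists C > 0 such that (Σ_{j=1}^m (|b_j^{(1)} ⋯ b_j^{(n)}| · A(x_j^{(1)}, …, x_j^{(n)}))^q)^{1/q} ≤ C · ∏_{k=1}^n sup_{φ∈B_{X_k*}} (Σ_{j=1}^m (|b_j^{(k)}| · |φ(x_j^{(k)})|)^{q_k})^{1/q_k} for every m ∈ ℕ and all x_j^{(k)} ∈ X_k and scalars b_j^{(k)}, then there exist a constant C' > 0 and Borel probability measures μ_k on B_{X_k*} (k = 1, …, n) such that A(x^{(1)}, …, x^{(n)}) ≤ C' · ∏_{k=1}^n (∫_{B_{X_k*}} |φ(x^{(k)})|^{q_k} dμ_k(φ))^{1/q_k} for all x^{(k)} ∈ X_k. -/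
open scoped BigOperators
open MeasureTheory

/-- The closed unit ball of the dual of `X`, endowed with the weak-star topology
(by Banach–Alaoglu, a compact Hausdorff space), carrying its Borel σ-algebra. -/
def weakDualBall (𝕜 X : Type*) [NontriviallyNormedField 𝕜]
    [SeminormedAddCommGroup X] [NormedSpace 𝕜 X] : Type _ :=
  {φ : WeakDual 𝕜 X // ‖WeakDual.toStrongDual φ‖ ≤ 1}

noncomputable instance (𝕜 X : Type*) [NontriviallyNormedField 𝕜]
    [SeminormedAddCommGroup X] [NormedSpace 𝕜 X] :
    TopologicalSpace (weakDualBall 𝕜 X) :=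
  instTopologicalSpaceSubtype

noncomputable instance (𝕜 X : Type*) [NontriviallyNormedField 𝕜]
    [SeminormedAddCommGroup X] [NormedSpace 𝕜 X] :
    MeasurableSpace (weakDualBall 𝕜 X) := borel _

open Filter Topology
open scoped NNReal

/-!
Pietsch domination through Ky Fan's lemma. With `θ k = q₀ / q k` (so `∑ θ k = 1`) and
`B = (A / C) ^ q₀`, consider for each point `z` and weights `β ≥ 0` the function
`μ ↦ (∏ β k ^ θ k) * B z - ∑ θ k * β k * ∫ |φ (z k)| ^ q k dμ k` on tuples of probability
measures on the dual balls, a compact space. These functions are continuous and affine under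
mixing of measures, and the hypothesis, tested at Dirac masses at maximising functionals and
combined with the weighted AM–GM inequality, makes every nonnegative finite combination of them
`≤ 0` somewhere. Compactness and Hahn–Banach separation in a finite-dimensional space produce one tuple
`μ` at which all of them are `≤ 0`; choosing `β k = (∫ |φ (z k)| ^ q k dμ k + ε)⁻¹` turns this
into the domination inequality.
-/

theorem exists_forall_nonpos_of_forall_sum_nonpos {X ι : Type*} [TopologicalSpace X]
    [CompactSpace X] (G : ι → X → ℝ) (hG : ∀ i, Continuous (G i))
    (hmix : ∀ x y : X, ∀ a b : ℝ, 0 ≤ a → 0 ≤ b → a + b = 1 →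
      ∃ z, ∀ i, G i z = a * G i x + b * G i y)
    (h : ∀ (t : Finset ι) (w : t → ℝ), (∀ i, 0 ≤ w i) → ∃ x, ∑ i, w i * G i x ≤ 0) :
    ∃ x, ∀ i, G i x ≤ 0 := by
  classical
  by_contra! hpos
  obtain ⟨t, ht⟩ := isCompact_univ.elim_finite_subfamily_closed (fun i => {x | G i x ≤ 0})
    (fun i => isClosed_le (hG i) continuous_const)
    (by simpa [Set.eq_empty_iff_forall_notMem] using hpos)
  let T : X → (t → ℝ) := fun x i => G i x
  have hT_convex : Convex ℝ (Set.range T) := by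
    rintro _ ⟨x, rfl⟩ _ ⟨y, rfl⟩ a b ha hb hab
    obtain ⟨z, hz⟩ := hmix x y a b ha hb hab
    exact ⟨z, funext fun i => hz i⟩
  have hT_compact : IsCompact (Set.range T) := isCompact_range (continuous_pi fun i => hG i)
  have hdisj : Disjoint (Set.range T) (Set.Iic 0) := by
    rw [Set.disjoint_left]
    rintro _ ⟨x, rfl⟩ hx
    have : x ∈ Set.univ ∩ ⋂ i ∈ t, {x | G i x ≤ 0} :=
      ⟨trivial, Set.mem_iInter₂.2 fun i hi => hx ⟨i, hi⟩⟩
    simp [ht] at this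
  obtain ⟨f, u, v, hfu, huv, hfv⟩ := geometric_hahn_banach_compact_closed hT_convex hT_compact
    (convex_Iic 0) isClosed_Iic hdisj
  have hv : v < 0 := by simpa using hfv 0 Set.self_mem_Iic
  -- `f > v` on the cone `Iic 0`, and `v / f y` would rescale a point with `f y < 0` onto `f = v`
  have hf_nonneg : ∀ y ≤ 0, 0 ≤ f y := by
    intro y hy
    by_contra! hfy
    have := hfv ((v / f y) • y)
      (smul_nonpos_of_nonneg_of_nonpos (div_nonneg_of_nonpos hv.le hfy.le) hy)
    rw [map_smul, smul_eq_mul, div_mul_cancel₀ _ hfy.ne] at this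
    exact lt_irrefl _ this
  let e : t → t → ℝ := fun i j => if i = j then 1 else 0
  obtain ⟨x, hx⟩ := h t (fun i => f (-e i)) fun i => hf_nonneg _ fun j => by
    simp only [Pi.neg_apply, Pi.zero_apply, e]
    split_ifs <;> norm_num
  have hfT : f (T x) = -∑ i, f (-e i) * G i x := by
    rw [show T x = ∑ i, T x i • e i from pi_eq_sum_univ _, map_sum, ← Finset.sum_neg_distrib]
    exact Finset.sum_congr rfl fun i _ => by simp [T, mul_comm]
  linarith [hfu _ ⟨x, rfl⟩]

theorem MeasureTheory.ProbabilityMeasure.exists_integral_eq_convexComb {Y : Type*}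
    [TopologicalSpace Y] [CompactSpace Y] [MeasurableSpace Y] [OpensMeasurableSpace Y]
    (μ ν : ProbabilityMeasure Y) {a b : ℝ} (ha : 0 ≤ a) (hb : 0 ≤ b) (hab : a + b = 1) :
    ∃ ρ : ProbabilityMeasure Y, ∀ g : Y → ℝ, Continuous g →
      ∫ y, g y ∂ρ = a * ∫ y, g y ∂μ + b * ∫ y, g y ∂ν := by
  let ρ : Measure Y := ENNReal.ofReal a • (μ : Measure Y) + ENNReal.ofReal b • (ν : Measure Y)
  have : IsProbabilityMeasure ρ := ⟨by simp [ρ, ← ENNReal.ofReal_add ha hb, hab]⟩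
  refine ⟨⟨ρ, this⟩, fun g hg => ?_⟩
  have hint (m : ProbabilityMeasure Y) (c : ℝ) :
      Integrable g (ENNReal.ofReal c • (m : Measure Y)) :=
    (hg.integrable_of_hasCompactSupport (HasCompactSupport.of_compactSpace g)).smul_measure
      ENNReal.ofReal_ne_top
  rw [ProbabilityMeasure.coe_mk, integral_add_measure (hint μ a) (hint ν b),
    integral_smul_measure, integral_smul_measure, ENNReal.toReal_ofReal ha,
    ENNReal.toReal_ofReal hb, smul_eq_mul, smul_eq_mul]

theorem Real.prod_mul_rpow_of_sum_eq_one {ι : Type*} (s : Finset ι) {r : ℝ} (hr : 0 ≤ r)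
    {β θ : ι → ℝ} (hβ : ∀ k ∈ s, 0 ≤ β k) (hθ : ∀ k ∈ s, 0 ≤ θ k) (hθ1 : ∑ k ∈ s, θ k = 1) :
    ∏ k ∈ s, (r * β k) ^ θ k = r * ∏ k ∈ s, β k ^ θ k := by
  rw [Finset.prod_congr rfl fun k hk => Real.mul_rpow hr (hβ k hk), Finset.prod_mul_distrib,
    ← Real.rpow_sum_of_nonneg hr hθ, hθ1, Real.rpow_one]

theorem Real.rpow_one_div_mul_rpow {r s p : ℝ} (hr : 0 ≤ r) (hs : 0 ≤ s) (hp : p ≠ 0) :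
    (r ^ (1 / p) * s) ^ p = r * s ^ p := by
  rw [Real.mul_rpow (Real.rpow_nonneg hr _) hs, ← Real.rpow_mul hr, one_div_mul_cancel hp,
    Real.rpow_one]

theorem Real.prod_rpow_one_div_mul_rpow {ι : Type*} (s : Finset ι) {w q : ι → ℝ}
    (hw : ∀ k ∈ s, 0 ≤ w k) {a : ℝ} (ha : 0 ≤ a) (p : ℝ) :
    ((∏ k ∈ s, w k ^ (1 / q k)) * a) ^ p = (∏ k ∈ s, w k ^ (p / q k)) * a ^ p := by
  rw [Real.mul_rpow (Finset.prod_nonneg fun k hk => Real.rpow_nonneg (hw k hk) _) ha,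
    ← Real.finsetProd_rpow _ _ fun k hk => Real.rpow_nonneg (hw k hk) _]
  congr 1
  exact Finset.prod_congr rfl fun k hk => by rw [← Real.rpow_mul (hw k hk), one_div_mul_eq_div]

theorem Real.le_prod_rpow_of_forall_le_sum {ι : Type*} [Fintype ι] {θ J : ι → ℝ} {a : ℝ}
    (hθ : ∀ k, 0 ≤ θ k) (hθ1 : ∑ k, θ k = 1) (hJ : ∀ k, 0 ≤ J k)
    (h : ∀ β : ι → ℝ≥0, (∏ k, (β k : ℝ) ^ θ k) * a ≤ ∑ k, θ k * β k * J k) :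
    a ≤ ∏ k, J k ^ θ k := by
  have hlim : Tendsto (fun ε => ∏ k, (J k + ε) ^ θ k) (𝓝[>] 0) (𝓝 (∏ k, J k ^ θ k)) := by
    refine tendsto_nhdsWithin_of_tendsto_nhds ?_
    simpa using tendsto_finsetProd _ fun k _ =>
      (Real.continuousAt_rpow_const _ _ (Or.inr (hθ k))).tendsto.comp
        ((continuous_const.add continuous_id).tendsto 0)
  refine ge_of_tendsto hlim (eventually_nhdsWithin_of_forall fun ε (hε : 0 < ε) => ?_)
  have hJε : ∀ k, 0 < J k + ε := fun k => add_pos_of_nonneg_of_pos (hJ k) hε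
  have hP : 0 < ∏ k, (J k + ε) ^ θ k :=
    Finset.prod_pos fun k _ => Real.rpow_pos_of_pos (hJε k) _
  have key := h fun k => (J k + ε).toNNReal⁻¹
  simp only [NNReal.coe_inv, Real.coe_toNNReal _ (hJε _).le, Real.inv_rpow (hJε _).le,
    Finset.prod_inv_distrib] at key
  have hsum : ∑ k, θ k * (J k + ε)⁻¹ * J k ≤ 1 := by
    rw [← hθ1]
    refine Finset.sum_le_sum fun k _ => ?_
    rw [mul_assoc]
    refine mul_le_of_le_one_right (hθ k) ?_
    rw [inv_mul_le_iff₀ (hJε k)]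
    linarith
  rw [inv_mul_le_iff₀ hP] at key
  linarith [key.trans (mul_le_mul_of_nonneg_left hsum hP.le)]

section Domination

variable {ι : Type*} [Fintype ι] {Z Y : ι → Type*} [∀ k, TopologicalSpace (Y k)]
  [∀ k, MeasurableSpace (Y k)]

def SatisfiesSummingInequality (f : ∀ k, Z k → Y k → ℝ) (θ : ι → ℝ) (B : (∀ k, Z k) → ℝ) :
    Prop :=
  ∀ (m : ℕ) (z : Fin m → ∀ k, Z k) (w : Fin m → ι → ℝ≥0), ∃ y : ∀ k, Y k,
    ∑ j, (∏ k, (w j k : ℝ) ^ θ k) * B (z j) ≤ ∏ k, (∑ j, w j k * f k (z j k) (y k)) ^ θ k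

/-- Its nonpositivity at `μ` for all `c = (z, β)` is, by `Real.le_prod_rpow_of_forall_le_sum`,
the domination `B z ≤ ∏ k, (∫ f k (z k) dμ k) ^ θ k`. -/
noncomputable def dominationDefect (f : ∀ k, Z k → Y k → ℝ) (θ : ι → ℝ) (B : (∀ k, Z k) → ℝ)
    (c : (∀ k, Z k) × (ι → ℝ≥0)) (μ : ∀ k, ProbabilityMeasure (Y k)) : ℝ :=
  (∏ k, (c.2 k : ℝ) ^ θ k) * B c.1 - ∑ k, θ k * c.2 k * ∫ y, f k (c.1 k) y ∂(μ k)

variable [∀ k, OpensMeasurableSpace (Y k)] {f : ∀ k, Z k → Y k → ℝ} {θ : ι → ℝ}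
  {B : (∀ k, Z k) → ℝ}

theorem continuous_dominationDefect [∀ k, CompactSpace (Y k)] (hf : ∀ k z, Continuous (f k z))
    (c : (∀ k, Z k) × (ι → ℝ≥0)) : Continuous (dominationDefect f θ B c) :=
  continuous_const.sub <| continuous_finsetSum _ fun k _ => continuous_const.mul <|
    (ProbabilityMeasure.continuous_integral_continuousMap (⟨_, hf k (c.1 k)⟩ : C(Y k, ℝ))).comp
      (continuous_apply k)

theorem exists_dominationDefect_eq_convexComb [∀ k, CompactSpace (Y k)]
    (hf : ∀ k z, Continuous (f k z)) (μ ν : ∀ k, ProbabilityMeasure (Y k)) {a b : ℝ}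
    (ha : 0 ≤ a) (hb : 0 ≤ b) (hab : a + b = 1) :
    ∃ ρ, ∀ c, dominationDefect f θ B c ρ =
      a * dominationDefect f θ B c μ + b * dominationDefect f θ B c ν := by
  choose ρ hρ using fun k => (μ k).exists_integral_eq_convexComb (ν k) ha hb hab
  refine ⟨ρ, fun c => ?_⟩
  have hsum : ∑ k, θ k * c.2 k * ∫ y, f k (c.1 k) y ∂(ρ k) =
      a * ∑ k, θ k * c.2 k * ∫ y, f k (c.1 k) y ∂(μ k) +
        b * ∑ k, θ k * c.2 k * ∫ y, f k (c.1 k) y ∂(ν k) := by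
    simp only [hρ _ _ (hf _ _), Finset.mul_sum, ← Finset.sum_add_distrib]
    exact Finset.sum_congr rfl fun k _ => by ring
  simp only [dominationDefect, hsum]
  linear_combination (-(∏ k, (c.2 k : ℝ) ^ θ k) * B c.1) * hab

theorem exists_sum_mul_dominationDefect_nonpos (hf : ∀ k z, Continuous (f k z))
    (hf0 : ∀ k z y, 0 ≤ f k z y) (hθ : ∀ k, 0 ≤ θ k) (hθ1 : ∑ k, θ k = 1)
    (hB : SatisfiesSummingInequality f θ B) (t : Finset ((∀ k, Z k) × (ι → ℝ≥0)))
    (w : t → ℝ) (hw : ∀ c, 0 ≤ w c) :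
    ∃ μ, ∑ c, w c * dominationDefect f θ B c μ ≤ 0 := by
  let e := (Fintype.equivFin t).symm
  let W : Fin (Fintype.card t) → ι → ℝ≥0 := fun j k => (w (e j)).toNNReal * (e j).1.2 k
  obtain ⟨y, hy⟩ := hB _ (fun j => (e j).1.1) W
  let S : ι → ℝ := fun k => ∑ j, W j k * f k ((e j).1.1 k) (y k)
  let δ : ∀ k, ProbabilityMeasure (Y k) := fun k => ⟨Measure.dirac (y k), inferInstance⟩
  have hW : ∀ j, ∏ k, (W j k : ℝ) ^ θ k = w (e j) * ∏ k, ((e j).1.2 k : ℝ) ^ θ k := fun j => by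
    simp only [W, NNReal.coe_mul, Real.coe_toNNReal _ (hw _)]
    exact Real.prod_mul_rpow_of_sum_eq_one _ (hw _) (fun k _ => NNReal.coe_nonneg _)
      (fun k _ => hθ k) hθ1
  refine ⟨δ, ?_⟩
  rw [← e.sum_comp]
  calc ∑ j, w (e j) * dominationDefect f θ B (e j) δ
      = ∑ j, (∏ k, (W j k : ℝ) ^ θ k) * B (e j).1.1 - ∑ k, θ k * S k := by
        simp only [dominationDefect, δ, ProbabilityMeasure.coe_mk,
          integral_dirac' _ _ (hf _ _).stronglyMeasurable, hW, S, W]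
        simp only [NNReal.coe_mul, Real.coe_toNNReal _ (hw _), mul_sub, Finset.sum_sub_distrib,
          Finset.mul_sum]
        rw [Finset.sum_comm]
        congr 1
        · exact Finset.sum_congr rfl fun j _ => by ring
        · exact Finset.sum_congr rfl fun k _ => Finset.sum_congr rfl fun j _ => by ring
    _ ≤ ∏ k, S k ^ θ k - ∑ k, θ k * S k := by gcongr
    _ ≤ 0 := sub_nonpos.2 <| Real.geom_mean_le_arith_mean_weighted _ _ _ (fun k _ => hθ k) hθ1
        fun k _ => Finset.sum_nonneg fun j _ => mul_nonneg (W j k).coe_nonneg (hf0 _ _ _)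

theorem exists_probabilityMeasure_forall_le_prod_integral_rpow [∀ k, CompactSpace (Y k)]
    [∀ k, T2Space (Y k)] [∀ k, BorelSpace (Y k)] (hf : ∀ k z, Continuous (f k z))
    (hf0 : ∀ k z y, 0 ≤ f k z y) (hθ : ∀ k, 0 ≤ θ k) (hθ1 : ∑ k, θ k = 1)
    (hB : SatisfiesSummingInequality f θ B) :
    ∃ μ : ∀ k, ProbabilityMeasure (Y k), ∀ z, B z ≤ ∏ k, (∫ y, f k (z k) y ∂(μ k)) ^ θ k := by
  obtain ⟨μ, hμ⟩ := exists_forall_nonpos_of_forall_sum_nonpos (dominationDefect f θ B)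
    (continuous_dominationDefect hf)
    (fun μ ν _ _ ha hb hab => exists_dominationDefect_eq_convexComb hf μ ν ha hb hab)
    (exists_sum_mul_dominationDefect_nonpos hf hf0 hθ hθ1 hB)
  refine ⟨μ, fun z => Real.le_prod_rpow_of_forall_le_sum hθ hθ1
    (fun k => integral_nonneg (hf0 k _)) fun β => ?_⟩
  simpa [dominationDefect, sub_nonpos] using hμ (z, β)

end Domination

namespace weakDualBall

variable (𝕜 X : Type*) [RCLike 𝕜] [NormedAddCommGroup X] [NormedSpace 𝕜 X]

instance : Nonempty (weakDualBall 𝕜 X) := ⟨⟨0, by simp⟩⟩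

instance : T2Space (weakDualBall 𝕜 X) := inferInstanceAs (T2Space (Subtype _))

instance : BorelSpace (weakDualBall 𝕜 X) := ⟨rfl⟩

instance : CompactSpace (weakDualBall 𝕜 X) := by
  have := WeakDual.isCompact_closedBall (𝕜 := 𝕜) (E := X) 0 1
  simp only [Metric.closedBall, dist_zero_right] at this
  exact isCompact_iff_compactSpace.mp this

variable {𝕜 X}

theorem continuous_norm_apply_rpow {p : ℝ} (hp : 0 ≤ p) (x : X) :
    Continuous fun φ : weakDualBall 𝕜 X => ‖φ.1 x‖ ^ p :=
  ((WeakDual.eval_continuous x).comp continuous_subtype_val).norm.rpow_const fun _ => Or.inr hp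

end weakDualBall

theorem satisfiesSummingInequality_weakDualBall {𝕜 : Type*} [RCLike 𝕜] {n : ℕ}
    {X : Fin n → Type*} [∀ k, NormedAddCommGroup (X k)] [∀ k, NormedSpace 𝕜 (X k)]
    {A : (∀ k, X k) → ℝ} (hA : ∀ x, 0 ≤ A x) {q : Fin n → ℝ} (hq : ∀ k, 0 < q k)
    {q₀ : ℝ} (hq₀ : 0 < q₀) {C : ℝ} (hC : 0 < C)
    (h : ∀ (m : ℕ) (x : Fin m → ∀ k, X k) (b : Fin m → Fin n → 𝕜),
      (∑ j, ((∏ k, ‖b j k‖) * A (x j)) ^ q₀) ^ (1 / q₀) ≤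
        C * ∏ k, ⨆ φ : weakDualBall 𝕜 (X k),
          (∑ j, (‖b j k‖ * ‖φ.1 (x j k)‖) ^ q k) ^ (1 / q k)) :
    SatisfiesSummingInequality (fun k x (φ : weakDualBall 𝕜 (X k)) => ‖φ.1 x‖ ^ q k)
      (fun k => q₀ / q k) (fun x => (A x / C) ^ q₀) := by
  intro m x w
  let S : ∀ k, weakDualBall 𝕜 (X k) → ℝ := fun k ψ => ∑ j, w j k * ‖ψ.1 (x j k)‖ ^ q k
  have hS0 : ∀ k ψ, 0 ≤ S k ψ := fun k ψ => Finset.sum_nonneg fun j _ =>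
    mul_nonneg (w j k).coe_nonneg (Real.rpow_nonneg (norm_nonneg _) _)
  choose φ _ hφ using fun k => isCompact_univ.exists_isMaxOn Set.univ_nonempty
    (continuous_finsetSum _ fun j _ => continuous_const.mul
      (weakDualBall.continuous_norm_apply_rpow (𝕜 := 𝕜) (hq k).le (x j k))).continuousOn
  refine ⟨φ, ?_⟩
  let b : Fin m → Fin n → 𝕜 := fun j k => (((w j k : ℝ) ^ (1 / q k) : ℝ) : 𝕜)
  have hb : ∀ j k, ‖b j k‖ = (w j k : ℝ) ^ (1 / q k) := fun j k => by
    simp [b, Real.rpow_nonneg (w j k).coe_nonneg]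
  have hsup : ∀ k, ⨆ ψ : weakDualBall 𝕜 (X k),
      (∑ j, (‖b j k‖ * ‖ψ.1 (x j k)‖) ^ q k) ^ (1 / q k) ≤ S k (φ k) ^ (1 / q k) := fun k => by
    refine ciSup_le fun ψ => ?_
    simp only [hb, Real.rpow_one_div_mul_rpow (w _ k).coe_nonneg (norm_nonneg _) (hq k).ne']
    exact Real.rpow_le_rpow (hS0 k ψ) (hφ k (Set.mem_univ ψ)) (one_div_nonneg.2 (hq k).le)
  have hL : 0 ≤ ∑ j, (∏ k, (w j k : ℝ) ^ (q₀ / q k)) * A (x j) ^ q₀ :=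
    Finset.sum_nonneg fun j _ => mul_nonneg
      (Finset.prod_nonneg fun k _ => Real.rpow_nonneg (w j k).coe_nonneg _)
      (Real.rpow_nonneg (hA _) _)
  have hP : 0 ≤ ∏ k, S k (φ k) ^ (1 / q k) :=
    Finset.prod_nonneg fun k _ => Real.rpow_nonneg (hS0 k _) _
  have hsumming := (h m x b).trans <| mul_le_mul_of_nonneg_left (Finset.prod_le_prod
    (fun k _ => Real.iSup_nonneg fun ψ => Real.rpow_nonneg
      (Finset.sum_nonneg fun j _ => Real.rpow_nonneg (by positivity) _) _)
    fun k _ => hsup k) hC.le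
  simp only [hb, Real.prod_rpow_one_div_mul_rpow _ (fun k _ => (w _ k).coe_nonneg) (hA _)]
    at hsumming
  rw [one_div, Real.rpow_inv_le_iff_of_pos hL (mul_nonneg hC.le hP) hq₀, Real.mul_rpow hC.le hP,
    ← Real.finsetProd_rpow _ _ fun k _ => Real.rpow_nonneg (hS0 k _) _] at hsumming
  simp only [← Real.rpow_mul (hS0 _ _), one_div_mul_eq_div] at hsumming
  simp only [Real.div_rpow (hA _) hC.le, mul_div_assoc', ← Finset.sum_div]
  rwa [div_le_iff₀' (Real.rpow_pos_of_pos hC _)]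

theorem stmt15_general {𝕜 : Type*} [RCLike 𝕜] {n : ℕ} {X : Fin n → Type*}
    [∀ k, NormedAddCommGroup (X k)] [∀ k, NormedSpace 𝕜 (X k)]
    (A : (∀ k, X k) → ℝ) (hA : ∀ x, 0 ≤ A x)
    (q : Fin n → ℝ) (hq : ∀ k, 0 < q k)
    (q₀ : ℝ) (hq₀ : 0 < q₀) (hq₀eq : 1 / q₀ = ∑ k, 1 / q k)
    (C : ℝ) (hC : 0 < C)
    (h : ∀ (m : ℕ) (x : Fin m → ∀ k, X k) (b : Fin m → Fin n → 𝕜),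
      (∑ j, ((∏ k, ‖b j k‖) * A (x j)) ^ q₀) ^ (1 / q₀) ≤
        C * ∏ k, ⨆ φ : weakDualBall 𝕜 (X k),
          (∑ j, (‖b j k‖ * ‖φ.1 (x j k)‖) ^ q k) ^ (1 / q k)) :
    ∃ C' : ℝ, 0 < C' ∧ ∃ μ : ∀ k, Measure (weakDualBall 𝕜 (X k)),
      (∀ k, IsProbabilityMeasure (μ k)) ∧
      ∀ x : ∀ k, X k,
        A x ≤ C' * ∏ k, (∫ φ, ‖φ.1 (x k)‖ ^ q k ∂(μ k)) ^ (1 / q k) := by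
  have hθ1 : ∑ k, q₀ / q k = 1 := by
    simp_rw [div_eq_mul_one_div q₀ (q _)]
    rw [← Finset.mul_sum, ← hq₀eq, mul_one_div_cancel hq₀.ne']
  obtain ⟨μ, hμ⟩ := exists_probabilityMeasure_forall_le_prod_integral_rpow
    (fun k => weakDualBall.continuous_norm_apply_rpow (hq k).le)
    (fun k _ _ => Real.rpow_nonneg (norm_nonneg _) _) (fun k => (div_pos hq₀ (hq k)).le) hθ1
    (satisfiesSummingInequality_weakDualBall hA hq hq₀ hC h)
  refine ⟨C, hC, fun k => μ k, fun k => inferInstance, fun x => ?_⟩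
  have hJ : ∀ k, 0 ≤ ∫ φ, ‖φ.1 (x k)‖ ^ q k ∂(μ k : Measure (weakDualBall 𝕜 (X k))) :=
    fun k => integral_nonneg fun _ => Real.rpow_nonneg (norm_nonneg _) _
  rw [← div_le_iff₀' hC, ← Real.rpow_le_rpow_iff (div_nonneg (hA x) hC.le)
      (Finset.prod_nonneg fun k _ => Real.rpow_nonneg (hJ k) _) hq₀,
    ← Real.finsetProd_rpow _ _ fun k _ => Real.rpow_nonneg (hJ k) _]
  simpa only [← Real.rpow_mul (hJ _), one_div_mul_eq_div] using hμ x

/-- Let `X₁, …, X_n` be Banach spaces, `A : X₁ × ⋯ × X_n → [0,∞)` an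
arbitrary map, `0 < q₁, …, q_n < ∞` and `1/q = ∑ 1/q_k`.  If there is `C > 0` such that
`(∑ⱼ (|bⱼ⁽¹⁾⋯bⱼ⁽ⁿ⁾| A(xⱼ⁽¹⁾,…,xⱼ⁽ⁿ⁾))^q)^{1/q} ≤ C ∏_k sup_{φ∈B_{X_k*}}
(∑ⱼ (|bⱼ⁽ᵏ⁾||φ(xⱼ⁽ᵏ⁾)|)^{q_k})^{1/q_k}` for all finite families, then there are `C' > 0`
and Borel probability measures `μ_k` on `B_{X_k*}` (weak-star topology) with
`A(x⁽¹⁾,…,x⁽ⁿ⁾) ≤ C' ∏_k (∫ |φ(x⁽ᵏ⁾)|^{q_k} dμ_k)^{1/q_k}` for all `x⁽ᵏ⁾ ∈ X_k`. -/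
theorem stmt15 {𝕜 : Type*} [RCLike 𝕜] {n : ℕ} {X : Fin n → Type*}
    [∀ k, NormedAddCommGroup (X k)] [∀ k, NormedSpace 𝕜 (X k)]
    [∀ k, CompleteSpace (X k)]
    (A : (∀ k, X k) → ℝ) (hA : ∀ x, 0 ≤ A x)
    (q : Fin n → ℝ) (hq : ∀ k, 0 < q k)
    (q₀ : ℝ) (hq₀ : 0 < q₀) (hq₀eq : 1 / q₀ = ∑ k, 1 / q k)
    (C : ℝ) (hC : 0 < C)
    (h : ∀ (m : ℕ) (x : Fin m → ∀ k, X k) (b : Fin m → Fin n → 𝕜),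
      (∑ j, ((∏ k, ‖b j k‖) * A (x j)) ^ q₀) ^ (1 / q₀) ≤
        C * ∏ k, ⨆ φ : weakDualBall 𝕜 (X k),
          (∑ j, (‖b j k‖ * ‖φ.1 (x j k)‖) ^ q k) ^ (1 / q k)) :
    ∃ C' : ℝ, 0 < C' ∧ ∃ μ : ∀ k, Measure (weakDualBall 𝕜 (X k)),
      (∀ k, IsProbabilityMeasure (μ k)) ∧
      ∀ x : ∀ k, X k,
        A x ≤ C' * ∏ k, (∫ φ, ‖φ.1 (x k)‖ ^ q k ∂(μ k)) ^ (1 / q k) :=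
  stmt15_general A hA q hq q₀ hq₀ hq₀eq C hC h
end

section
/- (Inclusion Theorem for absolutely summing operators.) Let X and Y be Banach spaces, let p₁, p₂, q₁, q₂ satisfy condition (★), and let u : X → Y be a continuous linear operator. If u is absolutely (q₁,p₁)-summing, then u is absolutely (q₂,p₂)-summing; moreover, if C > 0 satisfies (Σ_{j=1}^m ‖u(x_j)‖^{q₁})^{1/q₁} ≤ C · sup_{φ∈B_{X*}} (Σ_{j=1}^m |φ(x_j)|^{p₁})^{1/p₁} for every m ∈ ℕ and all x₁, …, x_m ∈ X, then (Σ_{j=1}^m ‖u(x_j)‖^{q₂})^{1/q₂} ≤ C · sup_{φ∈B_{X*}} (Σ_{j=1}^m |φ(x_j)|^{p₂})^{1/p₂} for every m ∈ ℕ and all x₁, …, x_m ∈ X. -/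
/-! Given `x₁, …, xₘ`, put `s = 1/q₁ - 1/q₂` and rescale to `yⱼ = σⱼ xⱼ` with
`σⱼ = ‖u xⱼ‖ ^ (q₂ s)`, chosen so that `∑ ‖u yⱼ‖ ^ q₁ = ∑ ‖u xⱼ‖ ^ q₂ =: S`. Condition (★) says
`1/p₁ ≤ s + 1/p₂`, so a generalized Hölder inequality bounds the weak `ℓ^{p₁}` norm of `y` by
`‖σ‖_{1/s} = S ^ s` times the weak `ℓ^{p₂}` norm of `x`. The `(q₁,p₁)` inequality for `y` then
reads `S ^ (1/q₁) ≤ C S ^ s weakLpNorm p₂ x`, and dividing by `S ^ s` gives the `(q₂,p₂)`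
inequality for `x`. -/

open scoped BigOperators

/-- A continuous linear operator `u : X → Y` is absolutely `(q,p)`-summing if there is
`C > 0` with `(∑ⱼ ‖u xⱼ‖^q)^{1/q} ≤ C sup_{φ∈B_{X*}} (∑ⱼ |φ(xⱼ)|^p)^{1/p}` for all finite
families. -/
def AbsSumming {𝕜 : Type*} [RCLike 𝕜] {X Y : Type*}
    [NormedAddCommGroup X] [NormedSpace 𝕜 X]
    [NormedAddCommGroup Y] [NormedSpace 𝕜 Y]
    (q p : ℝ) (u : X →L[𝕜] Y) : Prop :=
  ∃ C : ℝ, 0 < C ∧ ∀ (m : ℕ) (x : Fin m → X),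
    (∑ j, ‖u (x j)‖ ^ q) ^ (1 / q) ≤
      C * ⨆ φ : {φ : X →L[𝕜] 𝕜 // ‖φ‖ ≤ 1}, (∑ j, ‖φ.1 (x j)‖ ^ p) ^ (1 / p)

section LpInequalities

open Finset Real

variable {ι : Type*} (s : Finset ι)

theorem Real.Lq_le_Lp_of_nonneg_s18 {f : ι → ℝ} (hf : ∀ i ∈ s, 0 ≤ f i) {p q : ℝ}
    (hp : 0 < p) (hpq : p ≤ q) :
    (∑ i ∈ s, f i ^ q) ^ (1 / q) ≤ (∑ i ∈ s, f i ^ p) ^ (1 / p) := by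
  have hq : 0 < q := hp.trans_le hpq
  have hsum_nonneg : ∀ t : ℝ, 0 ≤ ∑ i ∈ s, f i ^ t := fun t =>
    sum_nonneg fun i hi => rpow_nonneg (hf i hi) t
  set T := (∑ i ∈ s, f i ^ p) ^ (1 / p) with hT_def
  have hT : 0 ≤ T := rpow_nonneg (hsum_nonneg p) _
  have hTp : T ^ p = ∑ i ∈ s, f i ^ p := by
    rw [hT_def, one_div, rpow_inv_rpow (hsum_nonneg p) hp.ne']
  have hfT : ∀ i ∈ s, f i ≤ T := fun i hi =>
    calc f i = (f i ^ p) ^ (1 / p) := by rw [one_div, rpow_rpow_inv (hf i hi) hp.ne']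
      _ ≤ T := by
        rw [hT_def]
        gcongr
        · exact rpow_nonneg (hf i hi) p
        · exact single_le_sum (fun j hj => rpow_nonneg (hf j hj) p) hi
  have hsum : ∑ i ∈ s, f i ^ q ≤ T ^ q :=
    calc ∑ i ∈ s, f i ^ q = ∑ i ∈ s, f i ^ (q - p) * f i ^ p :=
          sum_congr rfl fun i hi => by
            rw [← rpow_add' (hf i hi) (by linarith), sub_add_cancel]
      _ ≤ ∑ i ∈ s, T ^ (q - p) * f i ^ p := by
          gcongr with i hi
          · exact rpow_nonneg (hf i hi) p
          · exact hf i hi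
          · exact hfT i hi
      _ = T ^ q := by
          rw [← mul_sum, ← hTp, ← rpow_add' hT (by linarith), sub_add_cancel]
  calc (∑ i ∈ s, f i ^ q) ^ (1 / q) ≤ (T ^ q) ^ (1 / q) := by
        gcongr
        exact hsum_nonneg q
    _ = T := by rw [one_div, rpow_rpow_inv hT hq.ne']

theorem Real.Lr_le_Lp_mul_Lq_of_nonneg_of_le {f g : ι → ℝ} (hf : ∀ i ∈ s, 0 ≤ f i)
    (hg : ∀ i ∈ s, 0 ≤ g i) {p q r : ℝ} (hp : 0 < p) (hq : 0 < q) (hr : 0 < r)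
    (hpqr : 1 / r ≤ 1 / p + 1 / q) :
    (∑ i ∈ s, (f i * g i) ^ r) ^ (1 / r) ≤
      (∑ i ∈ s, f i ^ p) ^ (1 / p) * (∑ i ∈ s, g i ^ q) ^ (1 / q) := by
  have hfg : ∀ i ∈ s, 0 ≤ f i * g i := fun i hi => mul_nonneg (hf i hi) (hg i hi)
  have hF : 0 ≤ ∑ i ∈ s, f i ^ p := sum_nonneg fun i hi => rpow_nonneg (hf i hi) p
  have hG : 0 ≤ ∑ i ∈ s, g i ^ q := sum_nonneg fun i hi => rpow_nonneg (hg i hi) q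
  set r' := (p⁻¹ + q⁻¹)⁻¹
  have hpqr' : p.HolderTriple q r' := .of_pos hp hq
  have hr' : r' ≤ r := by
    simp only [one_div] at hpqr
    simpa using inv_anti₀ (inv_pos.2 hr) hpqr
  calc (∑ i ∈ s, (f i * g i) ^ r) ^ (1 / r)
      ≤ (∑ i ∈ s, (f i * g i) ^ r') ^ (1 / r') := Lq_le_Lp_of_nonneg_s18 s hfg hpqr'.pos' hr'
    _ ≤ ((∑ i ∈ s, f i ^ p) ^ (r' / p) * (∑ i ∈ s, g i ^ q) ^ (r' / q)) ^ (1 / r') := by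
        gcongr
        · exact sum_nonneg fun i hi => rpow_nonneg (hfg i hi) r'
        · exact Lr_rpow_le_Lp_mul_Lq_of_nonneg s hpqr' hf hg
    _ = (∑ i ∈ s, f i ^ p) ^ (1 / p) * (∑ i ∈ s, g i ^ q) ^ (1 / q) := by
        rw [mul_rpow (rpow_nonneg hF _) (rpow_nonneg hG _), ← rpow_mul hF, ← rpow_mul hG]
        congr 2 <;> field_simp [hpqr'.ne_zero']

end LpInequalities

section WeakLpNorm

open Finset Real

variable {𝕜 : Type*} [RCLike 𝕜] {X Y : Type*} [NormedAddCommGroup X] [NormedSpace 𝕜 X]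
  [NormedAddCommGroup Y] [NormedSpace 𝕜 Y] {ι : Type*} [Fintype ι]

variable (𝕜) in
noncomputable def weakLpNorm (p : ℝ) (x : ι → X) : ℝ :=
  ⨆ φ : {φ : X →L[𝕜] 𝕜 // ‖φ‖ ≤ 1}, (∑ j, ‖φ.1 (x j)‖ ^ p) ^ (1 / p)

theorem le_weakLpNorm {p : ℝ} (hp : 0 < p) (x : ι → X) (φ : {φ : X →L[𝕜] 𝕜 // ‖φ‖ ≤ 1}) :
    (∑ j, ‖φ.1 (x j)‖ ^ p) ^ (1 / p) ≤ weakLpNorm 𝕜 p x := by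
  refine le_ciSup (f := fun ψ : {φ : X →L[𝕜] 𝕜 // ‖φ‖ ≤ 1} => (∑ j, ‖ψ.1 (x j)‖ ^ p) ^ (1 / p))
    ⟨(∑ j, ‖x j‖ ^ p) ^ (1 / p), ?_⟩ φ
  rintro _ ⟨ψ, rfl⟩
  beta_reduce
  gcongr with j
  simpa using ψ.1.le_of_opNorm_le ψ.2 (x j)

theorem weakLpNorm_nonneg (p : ℝ) (x : ι → X) : 0 ≤ weakLpNorm 𝕜 p x :=
  Real.iSup_nonneg fun _ => rpow_nonneg (sum_nonneg fun _ _ => rpow_nonneg (norm_nonneg _) p) _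

theorem weakLpNorm_smul_le {p₁ p₂ r : ℝ} (hp₁ : 0 < p₁) (hp₂ : 0 < p₂) (hr : 0 < r)
    (h : 1 / p₁ ≤ 1 / r + 1 / p₂) {σ : ι → ℝ} (hσ : ∀ j, 0 ≤ σ j) (x : ι → X) :
    weakLpNorm 𝕜 p₁ (fun j => (σ j : 𝕜) • x j) ≤ (∑ j, σ j ^ r) ^ (1 / r) * weakLpNorm 𝕜 p₂ x := by
  have hσr : 0 ≤ (∑ j, σ j ^ r) ^ (1 / r) :=
    rpow_nonneg (sum_nonneg fun j _ => rpow_nonneg (hσ j) r) _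
  refine Real.iSup_le (fun φ => ?_) (mul_nonneg hσr (weakLpNorm_nonneg p₂ x))
  have hφ : ∀ j, ‖φ.1 ((σ j : 𝕜) • x j)‖ = σ j * ‖φ.1 (x j)‖ := fun j => by
    rw [map_smul, norm_smul, RCLike.norm_ofReal, abs_of_nonneg (hσ j)]
  simp only [hφ]
  calc (∑ j, (σ j * ‖φ.1 (x j)‖) ^ p₁) ^ (1 / p₁)
      ≤ (∑ j, σ j ^ r) ^ (1 / r) * (∑ j, ‖φ.1 (x j)‖ ^ p₂) ^ (1 / p₂) :=
        Lr_le_Lp_mul_Lq_of_nonneg_of_le _ (fun j _ => hσ j) (fun j _ => norm_nonneg _)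
          hr hp₂ hp₁ h
    _ ≤ (∑ j, σ j ^ r) ^ (1 / r) * weakLpNorm 𝕜 p₂ x :=
        mul_le_mul_of_nonneg_left (le_weakLpNorm hp₂ x φ) hσr

def SummingBound (u : X →L[𝕜] Y) (q p C : ℝ) (ι : Type*) [Fintype ι] : Prop :=
  ∀ x : ι → X, (∑ j, ‖u (x j)‖ ^ q) ^ (1 / q) ≤ C * weakLpNorm 𝕜 p x

theorem SummingBound.inclusion {u : X →L[𝕜] Y} {p₁ p₂ q₁ q₂ C : ℝ} (hp₁ : 0 < p₁)
    (hp₁₂ : p₁ ≤ p₂) (hq₁ : 0 < q₁) (hq₁₂ : q₁ ≤ q₂)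
    (hstar : 1 / p₁ - 1 / q₁ ≤ 1 / p₂ - 1 / q₂) (hC : 0 ≤ C)
    (h : SummingBound u q₁ p₁ C ι) : SummingBound u q₂ p₂ C ι := by
  intro x
  rcases hq₁₂.eq_or_lt with rfl | hq
  · obtain rfl : p₁ = p₂ := le_antisymm hp₁₂ <| le_of_one_div_le_one_div hp₁ (by linarith)
    exact h x
  have hp₂ : 0 < p₂ := hp₁.trans_le hp₁₂
  have hq₂ : 0 < q₂ := hq₁.trans hq
  set s := 1 / q₁ - 1 / q₂
  have hs : 0 < s := sub_pos.2 <| one_div_lt_one_div_of_lt hq₁ hq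
  have hholder : 1 / p₁ ≤ 1 / s⁻¹ + 1 / p₂ := by
    simp only [s, one_div, inv_inv] at hstar ⊢
    linarith
  set S := ∑ j, ‖u (x j)‖ ^ q₂
  have hS : 0 ≤ S := sum_nonneg fun j _ => rpow_nonneg (norm_nonneg _) q₂
  set σ : ι → ℝ := fun j => ‖u (x j)‖ ^ (q₂ * s)
  have hσ : ∀ j, 0 ≤ σ j := fun j => rpow_nonneg (norm_nonneg _) _
  have hσu : ∑ j, ‖u ((σ j : 𝕜) • x j)‖ ^ q₁ = S := sum_congr rfl fun j _ => by
    rw [map_smul, norm_smul, RCLike.norm_ofReal, abs_of_nonneg (hσ j),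
      ← rpow_add_one' (norm_nonneg _) (by positivity), ← rpow_mul (norm_nonneg _)]
    congr 1
    simp only [s]
    field_simp
    ring
  have hσs : (∑ j, σ j ^ s⁻¹) ^ (1 / s⁻¹) = S ^ s := by
    rw [one_div, inv_inv]
    congr 1
    refine sum_congr rfl fun j _ => ?_
    rw [← rpow_mul (norm_nonneg _), mul_inv_cancel_right₀ hs.ne']
  have key : S ^ s * S ^ (1 / q₂) ≤ S ^ s * (C * weakLpNorm 𝕜 p₂ x) :=
    calc S ^ s * S ^ (1 / q₂) = S ^ (1 / q₁) := by
          rw [← rpow_add' hS (add_pos hs (one_div_pos.2 hq₂)).ne', sub_add_cancel]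
      _ ≤ C * weakLpNorm 𝕜 p₁ (fun j => (σ j : 𝕜) • x j) := hσu ▸ h _
      _ ≤ C * ((∑ j, σ j ^ s⁻¹) ^ (1 / s⁻¹) * weakLpNorm 𝕜 p₂ x) := by
          gcongr
          exact weakLpNorm_smul_le hp₁ hp₂ (inv_pos.2 hs) hholder hσ x
      _ = S ^ s * (C * weakLpNorm 𝕜 p₂ x) := by rw [hσs]; ring
  rcases hS.eq_or_lt with hS0 | hSpos
  · rw [← hS0, zero_rpow (one_div_pos.2 hq₂).ne']
    exact mul_nonneg hC (weakLpNorm_nonneg p₂ x)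
  · exact le_of_mul_le_mul_left key (rpow_pos_of_pos hSpos _)

end WeakLpNorm

theorem stmt18_general {𝕜 : Type*} [RCLike 𝕜] {X Y : Type*}
    [NormedAddCommGroup X] [NormedSpace 𝕜 X]
    [NormedAddCommGroup Y] [NormedSpace 𝕜 Y]
    (p₁ p₂ q₁ q₂ : ℝ)
    (hp₁ : 1 ≤ p₁) (hp₁₂ : p₁ ≤ p₂) (hq₁ : 1 ≤ q₁) (hq₁₂ : q₁ ≤ q₂)
    (hstar : 1 / p₁ - 1 / q₁ ≤ 1 / p₂ - 1 / q₂)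
    (u : X →L[𝕜] Y) :
    (AbsSumming q₁ p₁ u → AbsSumming q₂ p₂ u) ∧
    (∀ C : ℝ, 0 < C →
      (∀ (m : ℕ) (x : Fin m → X),
        (∑ j, ‖u (x j)‖ ^ q₁) ^ (1 / q₁) ≤
          C * ⨆ φ : {φ : X →L[𝕜] 𝕜 // ‖φ‖ ≤ 1},
            (∑ j, ‖φ.1 (x j)‖ ^ p₁) ^ (1 / p₁)) →
      (∀ (m : ℕ) (x : Fin m → X),
        (∑ j, ‖u (x j)‖ ^ q₂) ^ (1 / q₂) ≤
          C * ⨆ φ : {φ : X →L[𝕜] 𝕜 // ‖φ‖ ≤ 1},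
            (∑ j, ‖φ.1 (x j)‖ ^ p₂) ^ (1 / p₂))) := by
  have inclusion (C : ℝ) (hC : 0 < C) (h : ∀ m, SummingBound u q₁ p₁ C (Fin m)) (m : ℕ) :
      SummingBound u q₂ p₂ C (Fin m) :=
    (h m).inclusion (by linarith) hp₁₂ (by linarith) hq₁₂ hstar hC.le
  exact ⟨fun ⟨C, hC, h⟩ => ⟨C, hC, inclusion C hC h⟩, inclusion⟩

/-- **Inclusion Theorem for absolutely summing operators.** If
`p₁, p₂, q₁, q₂` satisfy condition (★) and `u : X → Y` is a continuous linear operator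
between Banach spaces which is absolutely `(q₁,p₁)`-summing, then `u` is absolutely
`(q₂,p₂)`-summing; moreover any constant `C > 0` working for `(q₁,p₁)` also works for
`(q₂,p₂)`. -/
theorem stmt18 {𝕜 : Type*} [RCLike 𝕜] {X Y : Type*}
    [NormedAddCommGroup X] [NormedSpace 𝕜 X] [CompleteSpace X]
    [NormedAddCommGroup Y] [NormedSpace 𝕜 Y] [CompleteSpace Y]
    (p₁ p₂ q₁ q₂ : ℝ)
    (hp₁ : 1 ≤ p₁) (hp₁₂ : p₁ ≤ p₂) (hq₁ : 1 ≤ q₁) (hq₁₂ : q₁ ≤ q₂)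
    (hpq₁ : p₁ ≤ q₁) (hpq₂ : p₂ ≤ q₂)
    (hstar : 1 / p₁ - 1 / q₁ ≤ 1 / p₂ - 1 / q₂)
    (u : X →L[𝕜] Y) :
    (AbsSumming q₁ p₁ u → AbsSumming q₂ p₂ u) ∧
    (∀ C : ℝ, 0 < C →
      (∀ (m : ℕ) (x : Fin m → X),
        (∑ j, ‖u (x j)‖ ^ q₁) ^ (1 / q₁) ≤
          C * ⨆ φ : {φ : X →L[𝕜] 𝕜 // ‖φ‖ ≤ 1},
            (∑ j, ‖φ.1 (x j)‖ ^ p₁) ^ (1 / p₁)) →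
      (∀ (m : ℕ) (x : Fin m → X),
        (∑ j, ‖u (x j)‖ ^ q₂) ^ (1 / q₂) ≤
          C * ⨆ φ : {φ : X →L[𝕜] 𝕜 // ‖φ‖ ≤ 1},
            (∑ j, ‖φ.1 (x j)‖ ^ p₂) ^ (1 / p₂))) :=
  stmt18_general p₁ p₂ q₁ q₂ hp₁ hp₁₂ hq₁ hq₁₂ hstar u
end
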